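/- arXiv:2409.07754 — 5 statements merged into one kernel-verified Lean document; each statement's English description precedes it below -/
import Mathlib

section
/- For every finite complete bipartite graph (U,V,E) with weight function W : E → ℚ, W(u,v) ≥ 0, and B-value function B : G → ℤ, B(g) ≥ 1, there exists a nodes-core solution: an allocation x : G → ℚ with x_g ≥ 0 and a B-matching M ⊆ E such that for every coalition S = S_U ∪ S_V (S_U ⊆ U, S_V ⊆ V) the total allocation ∑_{g∈S} x_g is at least the maximum B-matching value over S, and ∑_{g∈G} x_g equals the maximum B-matching value over G, which is achieved by M. -/
open Finset

section BMatching

variable {U V : Type*}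

/-- A finite set of edges `M ⊆ U × V` is a `B`-matching when every node is incident
to at most its `B`-value many edges. -/
def IsBMatching [DecidableEq U] [DecidableEq V] (BU : U → ℤ) (BV : V → ℤ)
    (M : Finset (U × V)) : Prop :=
  (∀ u : U, ((M.filter fun e => e.1 = u).card : ℤ) ≤ BU u) ∧
  (∀ v : V, ((M.filter fun e => e.2 = v).card : ℤ) ≤ BV v)

/-- A copy of a node `g` is a pair `(g, k)` with `1 ≤ k ≤ B g`.  A finite set of
edges between copies is a `B`-copies matching when all endpoints are genuine copies,
every copy is incident to at most one edge, and for each node pair `(u, v)` at most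
one edge joins a copy of `u` to a copy of `v`. -/
def IsBCopiesMatching (BU : U → ℤ) (BV : V → ℤ)
    (𝓜 : Finset ((U × ℤ) × (V × ℤ))) : Prop :=
  (∀ e ∈ 𝓜, 1 ≤ e.1.2 ∧ e.1.2 ≤ BU e.1.1 ∧ 1 ≤ e.2.2 ∧ e.2.2 ≤ BV e.2.1) ∧
  (∀ e ∈ 𝓜, ∀ f ∈ 𝓜, e.1 = f.1 → e = f) ∧
  (∀ e ∈ 𝓜, ∀ f ∈ 𝓜, e.2 = f.2 → e = f) ∧
  (∀ e ∈ 𝓜, ∀ f ∈ 𝓜, e.1.1 = f.1.1 → e.2.1 = f.2.1 → e = f)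

/-- The reduced (nodes) matching of a copies matching. -/
def reduceMatching [DecidableEq U] [DecidableEq V]
    (𝓜 : Finset ((U × ℤ) × (V × ℤ))) : Finset (U × V) :=
  𝓜.image fun e => (e.1.1, e.2.1)

/-- A copies allocation is nonnegative on all genuine copies. -/
def AllocNonneg (BU : U → ℤ) (BV : V → ℤ) (aU : U → ℤ → ℚ) (aV : V → ℤ → ℚ) : Prop :=
  (∀ u i, 1 ≤ i → i ≤ BU u → 0 ≤ aU u i) ∧
  (∀ v j, 1 ≤ j → j ≤ BV v → 0 ≤ aV v j)

/-- Edge saturation: matched copies share exactly the weight of their edge. -/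
def EdgeSaturation (W : U → V → ℚ) (aU : U → ℤ → ℚ) (aV : V → ℤ → ℚ)
    (𝓜 : Finset ((U × ℤ) × (V × ℤ))) : Prop :=
  ∀ e ∈ 𝓜, aU e.1.1 e.1.2 + aV e.2.1 e.2.2 = W e.1.1 e.2.1

/-- Stability against pairwise deviation: for every node pair not in the reduced
matching, no pair of copies can jointly gain by matching. -/
def PairwiseStability [DecidableEq U] [DecidableEq V] (W : U → V → ℚ)
    (BU : U → ℤ) (BV : V → ℤ) (aU : U → ℤ → ℚ) (aV : V → ℤ → ℚ)
    (𝓜 : Finset ((U × ℤ) × (V × ℤ))) : Prop :=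
  ∀ u v, (u, v) ∉ reduceMatching 𝓜 →
    ∀ i j, 1 ≤ i → i ≤ BU u → 1 ≤ j → j ≤ BV v → W u v ≤ aU u i + aV v j

/-- Zero-gain for unmatched copies. -/
def ZeroGain (BU : U → ℤ) (BV : V → ℤ) (aU : U → ℤ → ℚ) (aV : V → ℤ → ℚ)
    (𝓜 : Finset ((U × ℤ) × (V × ℤ))) : Prop :=
  (∀ u i, 1 ≤ i → i ≤ BU u → (∀ e ∈ 𝓜, e.1 ≠ (u, i)) → aU u i = 0) ∧
  (∀ v j, 1 ≤ j → j ≤ BV v → (∀ e ∈ 𝓜, e.2 ≠ (v, j)) → aV v j = 0)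

/-- A copies-core solution. -/
def IsCopiesCore [DecidableEq U] [DecidableEq V] (W : U → V → ℚ)
    (BU : U → ℤ) (BV : V → ℤ) (aU : U → ℤ → ℚ) (aV : V → ℤ → ℚ)
    (𝓜 : Finset ((U × ℤ) × (V × ℤ))) : Prop :=
  IsBCopiesMatching BU BV 𝓜 ∧ AllocNonneg BU BV aU aV ∧
  EdgeSaturation W aU aV 𝓜 ∧ PairwiseStability W BU BV aU aV 𝓜 ∧
  ZeroGain BU BV aU aV 𝓜

/-- The node allocation of `u`: total of the allocations of its copies. -/
noncomputable def nodeAlloc (B : ℤ) (a : ℤ → ℚ) : ℚ := ∑ i ∈ Finset.Icc (1 : ℤ) B, a i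

/-- The set of values `∑_{(u,v) ∈ M'} W u v` achieved by `B`-matchings `M'` inside
the coalition `SU ∪ SV`. -/
def matchingValues [DecidableEq U] [DecidableEq V] (W : U → V → ℚ)
    (BU : U → ℤ) (BV : V → ℤ) (SU : Finset U) (SV : Finset V) : Set ℚ :=
  {t | ∃ M' : Finset (U × V), M' ⊆ SU ×ˢ SV ∧ IsBMatching BU BV M' ∧
    t = ∑ e ∈ M', W e.1 e.2}

end BMatching

open Finset

section Egervary

variable {A B : Type*} [DecidableEq A] [DecidableEq B]

/-- simple matching: edges pairwise disjoint in both coordinates -/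
def IsMtch (M : Finset (A × B)) : Prop :=
  (∀ e ∈ M, ∀ f ∈ M, e.1 = f.1 → e = f) ∧ (∀ e ∈ M, ∀ f ∈ M, e.2 = f.2 → e = f)

lemma IsMtch.mono {M N : Finset (A × B)} (h : IsMtch N) (hMN : M ⊆ N) : IsMtch M :=
  ⟨fun e he f hf => h.1 e (hMN he) f (hMN hf), fun e he f hf => h.2 e (hMN he) f (hMN hf)⟩

lemma IsMtch.insert {M : Finset (A × B)} (h : IsMtch M) {p : A × B}
    (h1 : ∀ e ∈ M, e.1 ≠ p.1) (h2 : ∀ e ∈ M, e.2 ≠ p.2) : IsMtch (insert p M) := by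
  constructor
  · intro e he f hf hef
    rcases Finset.mem_insert.1 he with he' | he' <;> rcases Finset.mem_insert.1 hf with hf' | hf'
    · rw [he', hf']
    · exact (h1 f hf' (by rw [← hef, he'])).elim
    · exact (h1 e he' (by rw [hef, hf'])).elim
    · exact h.1 e he' f hf' hef
  · intro e he f hf hef
    rcases Finset.mem_insert.1 he with he' | he' <;> rcases Finset.mem_insert.1 hf with hf' | hf'
    · rw [he', hf']
    · exact (h2 f hf' (by rw [← hef, he'])).elim
    · exact (h2 e he' (by rw [hef, hf'])).elim
    · exact h.2 e he' f hf' hef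

/-- The key exchange lemma: from a matching missing `a` and a matching missing `b`
we can produce a matching missing both `a` and `b` together with another matching,
with the same total weight. -/
lemma swap_lemma (W : A × B → ℕ) :
    ∀ (n : ℕ) (X Y : Finset (A × B)) (a : A) (b : B), X.card + Y.card ≤ n →
      IsMtch X → IsMtch Y → (∀ e ∈ X, e.1 ≠ a) → (∀ e ∈ Y, e.2 ≠ b) →
      ∃ Z Z' : Finset (A × B), Z ⊆ X ∪ Y ∧ Z' ⊆ X ∪ Y ∧ IsMtch Z ∧ IsMtch Z' ∧
        (∀ e ∈ Z, e.1 ≠ a) ∧ (∀ e ∈ Z, e.2 ≠ b) ∧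
        ((∑ e ∈ Z, W e) + ∑ e ∈ Z', W e) = (∑ e ∈ X, W e) + ∑ e ∈ Y, W e := by
  intro n
  induction n with
  | zero =>
    intro X Y a b hc hX hY hXa hYb
    have hX0 : X = ∅ := Finset.card_eq_zero.1 (by omega)
    have hY0 : Y = ∅ := Finset.card_eq_zero.1 (by omega)
    subst hX0; subst hY0
    exact ⟨∅, ∅, by simp, by simp, ⟨by simp, by simp⟩, ⟨by simp, by simp⟩, by simp, by simp, by simp⟩
  | succ n IH =>
    intro X Y a b hc hX hY hXa hYb
    by_cases hY1 : ∀ e ∈ Y, e.1 ≠ a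
    · exact ⟨Y, X, Finset.subset_union_right, Finset.subset_union_left, hY, hX, hY1, hYb,
        by rw [add_comm]⟩
    push_neg at hY1
    obtain ⟨e₀, he₀Y, he₀a⟩ := hY1
    have hb₀b : e₀.2 ≠ b := hYb e₀ he₀Y
    by_cases hX2 : ∀ e ∈ X, e.2 ≠ e₀.2
    · -- terminal case: give e₀ to X
      have he₀X : e₀ ∉ X := fun h => hXa e₀ h he₀a
      refine ⟨Y.erase e₀, insert e₀ X, ?_, ?_, hY.mono (Finset.erase_subset _ _), ?_, ?_, ?_, ?_⟩
      · exact (Finset.erase_subset _ _).trans Finset.subset_union_right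
      · exact Finset.insert_subset (Finset.mem_union_right _ he₀Y) Finset.subset_union_left
      · exact hX.insert (fun e he h => hXa e he (h.trans he₀a)) hX2
      · intro e he hea
        rcases Finset.mem_erase.1 he with ⟨hne, heY⟩
        exact hne (hY.1 e heY e₀ he₀Y (hea.trans he₀a.symm))
      · exact fun e he => hYb e (Finset.mem_of_mem_erase he)
      · rw [Finset.sum_insert he₀X]
        have := Finset.sum_erase_add Y W he₀Y
        omega
    push_neg at hX2
    obtain ⟨e₁, he₁X, he₁2⟩ := hX2
    have ha₁ : e₁.1 ≠ a := hXa e₁ he₁X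
    -- recursive case
    set X₁ := X.erase e₁ with hX₁
    set Y₁ := Y.erase e₀ with hY₁
    have hcard : X₁.card + Y₁.card ≤ n := by
      have h1 : X₁.card = X.card - 1 := by rw [hX₁]; exact Finset.card_erase_of_mem he₁X
      have h2 : Y₁.card = Y.card - 1 := by rw [hY₁]; exact Finset.card_erase_of_mem he₀Y
      have h3 : 0 < X.card := Finset.card_pos.2 ⟨e₁, he₁X⟩
      have h4 : 0 < Y.card := Finset.card_pos.2 ⟨e₀, he₀Y⟩
      omega
    have hX₁M : IsMtch X₁ := hX.mono (Finset.erase_subset _ _)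
    have hY₁M : IsMtch Y₁ := hY.mono (Finset.erase_subset _ _)
    have hX₁a₁ : ∀ e ∈ X₁, e.1 ≠ e₁.1 := by
      intro e he h
      rcases Finset.mem_erase.1 he with ⟨hne, heX⟩
      exact hne (hX.1 e heX e₁ he₁X h)
    have hY₁b : ∀ e ∈ Y₁, e.2 ≠ b := fun e he => hYb e (Finset.mem_of_mem_erase he)
    obtain ⟨Z₁, Z₁', hZ₁sub, hZ₁'sub, hZ₁M, hZ₁'M, hZ₁a₁, hZ₁b, hsum₁⟩ :=
      IH X₁ Y₁ e₁.1 b hcard hX₁M hY₁M hX₁a₁ hY₁b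
    -- no edge of X₁ ∪ Y₁ touches a or b₀
    have hno_a : ∀ e ∈ X₁ ∪ Y₁, e.1 ≠ a := by
      intro e he h
      rcases Finset.mem_union.1 he with he | he
      · exact hXa e (Finset.mem_of_mem_erase he) h
      · rcases Finset.mem_erase.1 he with ⟨hne, heY⟩
        exact hne (hY.1 e heY e₀ he₀Y (h.trans he₀a.symm))
    have hno_b₀ : ∀ e ∈ X₁ ∪ Y₁, e.2 ≠ e₀.2 := by
      intro e he h
      rcases Finset.mem_union.1 he with he | he
      · rcases Finset.mem_erase.1 he with ⟨hne, heX⟩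
        exact hne (hX.2 e heX e₁ he₁X (h.trans he₁2.symm))
      · rcases Finset.mem_erase.1 he with ⟨hne, heY⟩
        exact hne (hY.2 e heY e₀ he₀Y h)
    have hZ₁_a : ∀ e ∈ Z₁, e.1 ≠ a := fun e he => hno_a e (hZ₁sub he)
    have hZ₁_b₀ : ∀ e ∈ Z₁, e.2 ≠ e₀.2 := fun e he => hno_b₀ e (hZ₁sub he)
    have hZ₁'_a : ∀ e ∈ Z₁', e.1 ≠ a := fun e he => hno_a e (hZ₁'sub he)
    have hZ₁'_b₀ : ∀ e ∈ Z₁', e.2 ≠ e₀.2 := fun e he => hno_b₀ e (hZ₁'sub he)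
    have hsub' : X₁ ∪ Y₁ ⊆ X ∪ Y :=
      Finset.union_subset_union (Finset.erase_subset _ _) (Finset.erase_subset _ _)
    have he₁Z₁ : e₁ ∉ Z₁ := fun h => hZ₁_b₀ e₁ h he₁2
    have he₀Z₁' : e₀ ∉ Z₁' := fun h => hZ₁'_b₀ e₀ h rfl
    refine ⟨insert e₁ Z₁, insert e₀ Z₁', ?_, ?_, ?_, ?_, ?_, ?_, ?_⟩
    · exact Finset.insert_subset (Finset.mem_union_left _ he₁X) ((hZ₁sub.trans hsub'))
    · exact Finset.insert_subset (Finset.mem_union_right _ he₀Y) ((hZ₁'sub.trans hsub'))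
    · exact hZ₁M.insert hZ₁a₁ (fun e he h => hZ₁_b₀ e he (h.trans he₁2))
    · exact hZ₁'M.insert (fun e he h => hZ₁'_a e he (h.trans he₀a)) hZ₁'_b₀
    · intro e he
      rcases Finset.mem_insert.1 he with rfl | he
      · exact ha₁
      · exact hZ₁_a e he
    · intro e he
      rcases Finset.mem_insert.1 he with rfl | he
      · exact fun h => hb₀b (he₁2 ▸ h)
      · exact hZ₁b e he
    · rw [Finset.sum_insert he₁Z₁, Finset.sum_insert he₀Z₁']
      have h1 : (∑ e ∈ X₁, W e) + W e₁ = ∑ e ∈ X, W e := by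
        rw [hX₁]; exact Finset.sum_erase_add X W he₁X
      have h2 : (∑ e ∈ Y₁, W e) + W e₀ = ∑ e ∈ Y, W e := by
        rw [hY₁]; exact Finset.sum_erase_add Y W he₀Y
      omega

end Egervary

section Egervary2

variable {A B : Type*} [Fintype A] [Fintype B] [DecidableEq A] [DecidableEq B]

lemma weak_dual (W : A × B → ℕ) (yA : A → ℕ) (yB : B → ℕ) (M : Finset (A × B))
    (hM : IsMtch M) (hfeas : ∀ e ∈ M, W e ≤ yA e.1 + yB e.2) :
    ∑ e ∈ M, W e ≤ (∑ a, yA a) + ∑ b, yB b := by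
  have h1 : ∑ e ∈ M, yA e.1 ≤ ∑ a, yA a := by
    calc ∑ e ∈ M, yA e.1 = ∑ a ∈ M.image Prod.fst, yA a :=
          (Finset.sum_image (fun x hx y hy h => hM.1 x hx y hy h)).symm
      _ ≤ ∑ a, yA a := Finset.sum_le_sum_of_subset (Finset.subset_univ _)
  have h2 : ∑ e ∈ M, yB e.2 ≤ ∑ b, yB b := by
    calc ∑ e ∈ M, yB e.2 = ∑ b ∈ M.image Prod.snd, yB b :=
          (Finset.sum_image (fun x hx y hy h => hM.2 x hx y hy h)).symm
      _ ≤ ∑ b, yB b := Finset.sum_le_sum_of_subset (Finset.subset_univ _)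
  calc ∑ e ∈ M, W e ≤ ∑ e ∈ M, (yA e.1 + yB e.2) := Finset.sum_le_sum hfeas
    _ = (∑ e ∈ M, yA e.1) + ∑ e ∈ M, yB e.2 := Finset.sum_add_distrib
    _ ≤ _ := add_le_add h1 h2

lemma egervary (E : Finset (A × B)) :
    ∀ (n : ℕ) (W : A × B → ℕ), (∑ e ∈ E, W e) ≤ n →
    ∃ (yA : A → ℕ) (yB : B → ℕ) (M : Finset (A × B)), M ⊆ E ∧ IsMtch M ∧
      (∀ e ∈ E, W e ≤ yA e.1 + yB e.2) ∧
      (∀ M' ⊆ E, IsMtch M' → ∑ e ∈ M', W e ≤ ∑ e ∈ M, W e) ∧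
      ∑ e ∈ M, W e = (∑ a, yA a) + ∑ b, yB b := by
  intro n
  induction n with
  | zero =>
    intro W hW
    have h0 : ∀ e ∈ E, W e = 0 := by
      intro e he
      have := Finset.sum_le_sum_of_subset (f := W) (Finset.singleton_subset_iff.2 he)
      simp only [Finset.sum_singleton] at this
      omega
    refine ⟨0, 0, ∅, Finset.empty_subset _, ⟨by simp, by simp⟩, ?_, ?_, by simp⟩
    · intro e he; simp [h0 e he]
    · intro M' hM'E hM'
      have : ∑ e ∈ M', W e = 0 :=
        Finset.sum_eq_zero fun e he => h0 e (hM'E he)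
      simp [this]
  | succ n IH =>
    intro W hW
    classical
    by_cases h0 : ∀ e ∈ E, W e = 0
    · refine ⟨0, 0, ∅, Finset.empty_subset _, ⟨by simp, by simp⟩, ?_, ?_, by simp⟩
      · intro e he; simp [h0 e he]
      · intro M' hM'E hM'
        have : ∑ e ∈ M', W e = 0 := Finset.sum_eq_zero fun e he => h0 e (hM'E he)
        simp [this]
    push_neg at h0
    obtain ⟨e₀, he₀E, he₀pos⟩ := h0
    -- a maximum matching Ms
    obtain ⟨Ms, hMsmem, hMsmax⟩ :=
      Finset.exists_max_image (s := (E.powerset.filter fun M => IsMtch M))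
        (f := fun M => ∑ e ∈ M, W e)
        ⟨∅, by simp [IsMtch]⟩
    have hMsE : Ms ⊆ E := Finset.mem_powerset.1 (Finset.mem_filter.1 hMsmem).1
    have hMsM : IsMtch Ms := (Finset.mem_filter.1 hMsmem).2
    have hmax : ∀ M' ⊆ E, IsMtch M' → ∑ e ∈ M', W e ≤ ∑ e ∈ Ms, W e := by
      intro M' h1 h2
      exact hMsmax M' (Finset.mem_filter.2 ⟨Finset.mem_powerset.2 h1, h2⟩)
    have hsingleton : IsMtch ({e₀} : Finset (A × B)) := by
      constructor <;> (intro e he f hf _; rw [Finset.mem_singleton.1 he, Finset.mem_singleton.1 hf])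
    have hν1 : 0 < ∑ e ∈ Ms, W e := by
      have := hmax {e₀} (Finset.singleton_subset_iff.2 he₀E) hsingleton
      simp only [Finset.sum_singleton] at this
      omega
    -- dichotomy
    have hdich : (∃ a, ∀ M' ⊆ E, IsMtch M' → (∑ e ∈ Ms, W e ≤ ∑ e ∈ M', W e) →
          ∃ e ∈ M', e.1 = a ∧ 0 < W e) ∨
        (∃ b, ∀ M' ⊆ E, IsMtch M' → (∑ e ∈ Ms, W e ≤ ∑ e ∈ M', W e) →
          ∃ e ∈ M', e.2 = b ∧ 0 < W e) := by
      by_contra hcon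
      push_neg at hcon
      obtain ⟨hA, hB⟩ := hcon
      -- a positive edge of Ms
      have hpos : ∃ es ∈ Ms, 0 < W es := by
        by_contra h
        push_neg at h
        have : ∑ e ∈ Ms, W e = 0 := Finset.sum_eq_zero fun e he => by
          have := h e he; omega
        omega
      obtain ⟨es, hesMs, hespos⟩ := hpos
      obtain ⟨Ma, hMaE, hMaM, hMaval, hMa0⟩ := hA es.1
      obtain ⟨Mb, hMbE, hMbM, hMbval, hMb0⟩ := hB es.2
      -- filter away zero-weight edges
      set X := Ma.filter (fun e => W e ≠ 0) with hXdef
      set Y := Mb.filter (fun e => W e ≠ 0) with hYdef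
      have hXM : IsMtch X := hMaM.mono (Finset.filter_subset _ _)
      have hYM : IsMtch Y := hMbM.mono (Finset.filter_subset _ _)
      have hXval : ∑ e ∈ X, W e = ∑ e ∈ Ma, W e := by
        rw [hXdef]; exact Finset.sum_filter_ne_zero _
      have hYval : ∑ e ∈ Y, W e = ∑ e ∈ Mb, W e := by
        rw [hYdef]; exact Finset.sum_filter_ne_zero _
      have hXa : ∀ e ∈ X, e.1 ≠ es.1 := by
        intro e he h
        rcases Finset.mem_filter.1 he with ⟨heMa, hne⟩
        exact hne (Nat.le_zero.1 (hMa0 e heMa h))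
      have hYb : ∀ e ∈ Y, e.2 ≠ es.2 := by
        intro e he h
        rcases Finset.mem_filter.1 he with ⟨heMb, hne⟩
        exact hne (Nat.le_zero.1 (hMb0 e heMb h))
      obtain ⟨Z, Z', hZsub, hZ'sub, hZM, hZ'M, hZa, hZb, hsum⟩ :=
        swap_lemma W (X.card + Y.card) X Y es.1 es.2 le_rfl hXM hYM hXa hYb
      have hXYE : X ∪ Y ⊆ E := Finset.union_subset
        ((Finset.filter_subset _ _).trans hMaE) ((Finset.filter_subset _ _).trans hMbE)
      have hZ'le : ∑ e ∈ Z', W e ≤ ∑ e ∈ Ms, W e := hmax Z' (hZ'sub.trans hXYE) hZ'M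
      have hMaeq : ∑ e ∈ Ma, W e = ∑ e ∈ Ms, W e :=
        le_antisymm (hmax Ma hMaE hMaM) hMaval
      have hMbeq : ∑ e ∈ Mb, W e = ∑ e ∈ Ms, W e :=
        le_antisymm (hmax Mb hMbE hMbM) hMbval
      have hesZ : es ∉ Z := fun h => hZa es h rfl
      have hZnewM : IsMtch (insert es Z) := hZM.insert hZa hZb
      have hZnewE : insert es Z ⊆ E :=
        Finset.insert_subset (hMsE hesMs) (hZsub.trans hXYE)
      have hcontra := hmax _ hZnewE hZnewM
      rw [Finset.sum_insert hesZ] at hcontra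
      omega
    rcases hdich with ⟨a, hPa⟩ | ⟨b, hPb⟩
    · -- decrement weights on edges at a
      set W' : A × B → ℕ := fun e => if e.1 = a then W e - 1 else W e with hW'def
      have hW'le : ∀ e, W' e ≤ W e := by
        intro e; rw [hW'def]; dsimp only; split <;> omega
      obtain ⟨ea, heaMs, hea1, heapos⟩ := hPa Ms hMsE hMsM le_rfl
      have hW'ea : W' ea < W ea := by
        rw [hW'def]; dsimp only; rw [if_pos hea1]; omega
      have hlt : ∑ e ∈ E, W' e < ∑ e ∈ E, W e :=
        Finset.sum_lt_sum (fun e _ => hW'le e) ⟨ea, hMsE heaMs, hW'ea⟩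
      obtain ⟨yA', yB', M', hM'E, hM'M, hfeas', hmax', heq'⟩ := IH W' (by omega)
      -- key bound : value of M' under W' is < max value under W
      have hb : ∑ e ∈ M', W' e + 1 ≤ ∑ e ∈ Ms, W e := by
        by_contra h
        push_neg at h
        have h1 : ∑ e ∈ M', W' e ≤ ∑ e ∈ M', W e := Finset.sum_le_sum fun e _ => hW'le e
        have h2 : ∑ e ∈ M', W e ≤ ∑ e ∈ Ms, W e := hmax M' hM'E hM'M
        have h3 : ∑ e ∈ Ms, W e ≤ ∑ e ∈ M', W e := by omega
        obtain ⟨ea', hea'M', hea'1, hea'pos⟩ := hPa M' hM'E hM'M h3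
        have : ∑ e ∈ M', W' e < ∑ e ∈ M', W e :=
          Finset.sum_lt_sum (fun e _ => hW'le e)
            ⟨ea', hea'M', by rw [hW'def]; dsimp only; rw [if_pos hea'1]; omega⟩
        omega
      refine ⟨fun x => yA' x + (if x = a then 1 else 0), yB', Ms, hMsE, hMsM, ?_, hmax, ?_⟩
      · intro e he
        have := hfeas' e he
        rw [hW'def] at this; dsimp only at this
        show W e ≤ (yA' e.1 + if e.1 = a then 1 else 0) + yB' e.2
        by_cases h : e.1 = a
        · rw [if_pos h] at this; rw [if_pos h]; omega
        · rw [if_neg h] at this; rw [if_neg h]; omega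
      · have hsA : ∑ x, (yA' x + (if x = a then 1 else 0)) = (∑ x, yA' x) + 1 := by
          rw [Finset.sum_add_distrib, Finset.sum_ite_eq' Finset.univ a (fun _ => 1)]
          simp
        rw [hsA]
        have hub := weak_dual W (fun x => yA' x + (if x = a then 1 else 0)) yB' Ms hMsM
          (fun e he => by
            have := hfeas' e (hMsE he)
            rw [hW'def] at this; dsimp only at this
            show W e ≤ (yA' e.1 + if e.1 = a then 1 else 0) + yB' e.2
            by_cases h : e.1 = a
            · rw [if_pos h] at this; rw [if_pos h]; omega
            · rw [if_neg h] at this; rw [if_neg h]; omega)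
        rw [hsA] at hub
        omega
    · -- symmetric case on B side
      set W' : A × B → ℕ := fun e => if e.2 = b then W e - 1 else W e with hW'def
      have hW'le : ∀ e, W' e ≤ W e := by
        intro e; rw [hW'def]; dsimp only; split <;> omega
      obtain ⟨eb, hebMs, heb2, hebpos⟩ := hPb Ms hMsE hMsM le_rfl
      have hW'eb : W' eb < W eb := by
        rw [hW'def]; dsimp only; rw [if_pos heb2]; omega
      have hlt : ∑ e ∈ E, W' e < ∑ e ∈ E, W e :=
        Finset.sum_lt_sum (fun e _ => hW'le e) ⟨eb, hMsE hebMs, hW'eb⟩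
      obtain ⟨yA', yB', M', hM'E, hM'M, hfeas', hmax', heq'⟩ := IH W' (by omega)
      have hb : ∑ e ∈ M', W' e + 1 ≤ ∑ e ∈ Ms, W e := by
        by_contra h
        push_neg at h
        have h1 : ∑ e ∈ M', W' e ≤ ∑ e ∈ M', W e := Finset.sum_le_sum fun e _ => hW'le e
        have h2 : ∑ e ∈ M', W e ≤ ∑ e ∈ Ms, W e := hmax M' hM'E hM'M
        have h3 : ∑ e ∈ Ms, W e ≤ ∑ e ∈ M', W e := by omega
        obtain ⟨eb', heb'M', heb'2, heb'pos⟩ := hPb M' hM'E hM'M h3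
        have : ∑ e ∈ M', W' e < ∑ e ∈ M', W e :=
          Finset.sum_lt_sum (fun e _ => hW'le e)
            ⟨eb', heb'M', by rw [hW'def]; dsimp only; rw [if_pos heb'2]; omega⟩
        omega
      refine ⟨yA', fun x => yB' x + (if x = b then 1 else 0), Ms, hMsE, hMsM, ?_, hmax, ?_⟩
      · intro e he
        have := hfeas' e he
        rw [hW'def] at this; dsimp only at this
        show W e ≤ yA' e.1 + (yB' e.2 + if e.2 = b then 1 else 0)
        by_cases h : e.2 = b
        · rw [if_pos h] at this; rw [if_pos h]; omega
        · rw [if_neg h] at this; rw [if_neg h]; omega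
      · have hsB : ∑ x, (yB' x + (if x = b then 1 else 0)) = (∑ x, yB' x) + 1 := by
          rw [Finset.sum_add_distrib, Finset.sum_ite_eq' Finset.univ b (fun _ => 1)]
          simp
        rw [hsB]
        have hub := weak_dual W yA' (fun x => yB' x + (if x = b then 1 else 0)) Ms hMsM
          (fun e he => by
            have := hfeas' e (hMsE he)
            rw [hW'def] at this; dsimp only at this
            show W e ≤ yA' e.1 + (yB' e.2 + if e.2 = b then 1 else 0)
            by_cases h : e.2 = b
            · rw [if_pos h] at this; rw [if_pos h]; omega
            · rw [if_neg h] at this; rw [if_neg h]; omega)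
        rw [hsB] at hub
        omega

end Egervary2

section Gadget

variable {U V : Type*}

/-- Edge relation of the auxiliary "gadget" bipartite graph used to reduce
`B`-matchings with unit edge capacities to simple matchings. -/
def gedge {nV nU : ℕ} (bu : U → ℕ) (bv : V → ℕ) :
    ((U × Fin nV) ⊕ (U × V)) × ((V × Fin nU) ⊕ (U × V)) → Prop
  | (Sum.inl ui, Sum.inr p) => p.1 = ui.1 ∧ (ui.2 : ℕ) < bu ui.1
  | (Sum.inr p, Sum.inr q) => p = q
  | (Sum.inr p, Sum.inl vj) => p.2 = vj.1 ∧ (vj.2 : ℕ) < bv vj.1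
  | (Sum.inl _, Sum.inl _) => False

/-- The original node pair associated with a gadget edge. -/
def gpr {nV nU : ℕ} : ((U × Fin nV) ⊕ (U × V)) × ((V × Fin nU) ⊕ (U × V)) → U × V
  | (_, Sum.inr p) => p
  | (Sum.inr p, Sum.inl _) => p
  | (Sum.inl ui, Sum.inl vj) => (ui.1, vj.1)

lemma group_fst {γ : Type*} [AddCommMonoid γ] [Fintype U] [DecidableEq U]
    (M : Finset (U × V)) (f : U → γ) :
    ∑ e ∈ M, f e.1 = ∑ u, (M.filter fun e => e.1 = u).card • f u := by
  rw [← Finset.sum_fiberwise M (fun e => e.1) (fun e => f e.1)]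
  refine Finset.sum_congr rfl fun u _ => ?_
  rw [Finset.sum_congr rfl (fun e he => by rw [(Finset.mem_filter.1 he).2] :
      ∀ e ∈ M.filter fun e => e.1 = u, f e.1 = f u), Finset.sum_const]

lemma group_snd {γ : Type*} [AddCommMonoid γ] [Fintype V] [DecidableEq V]
    (M : Finset (U × V)) (f : V → γ) :
    ∑ e ∈ M, f e.2 = ∑ v, (M.filter fun e => e.2 = v).card • f v := by
  rw [← Finset.sum_fiberwise M (fun e => e.2) (fun e => f e.2)]
  refine Finset.sum_congr rfl fun v _ => ?_
  rw [Finset.sum_congr rfl (fun e he => by rw [(Finset.mem_filter.1 he).2] :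
      ∀ e ∈ M.filter fun e => e.2 = v, f e.2 = f v), Finset.sum_const]

variable [Fintype U] [Fintype V] [DecidableEq U] [DecidableEq V] [Nonempty U] [Nonempty V]

lemma exists_nat_dual (WN : U → V → ℕ) (bu : U → ℕ) (bv : V → ℕ)
    (hbu : ∀ u, 0 < bu u) (hbv : ∀ v, 0 < bv v)
    (hbu' : ∀ u, bu u ≤ Fintype.card V) (hbv' : ∀ v, bv v ≤ Fintype.card U) :
    ∃ (yU : U → ℕ) (yV : V → ℕ) (z : U → V → ℕ) (M : Finset (U × V)),
      (∀ u v, WN u v ≤ yU u + yV v + z u v) ∧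
      (∀ u, (M.filter fun e => e.1 = u).card ≤ bu u) ∧
      (∀ v, (M.filter fun e => e.2 = v).card ≤ bv v) ∧
      (∑ e ∈ M, WN e.1 e.2 = (∑ u, bu u * yU u) + (∑ v, bv v * yV v) + ∑ u, ∑ v, z u v) := by
  classical
  have hnV : 0 < Fintype.card V := Fintype.card_pos
  have hnU : 0 < Fintype.card U := Fintype.card_pos
  set Wt : ((U × Fin (Fintype.card V)) ⊕ (U × V)) × ((V × Fin (Fintype.card U)) ⊕ (U × V)) → ℕ :=
    fun et => WN (gpr et).1 (gpr et).2 with hWt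
  set Ed : Finset (((U × Fin (Fintype.card V)) ⊕ (U × V)) × ((V × Fin (Fintype.card U)) ⊕ (U × V))) :=
    Finset.univ.filter (gedge bu bv) with hEd
  obtain ⟨yA, yB, Mt, hMtE, hMtM, hfeas, hmax, heq⟩ := egervary Ed (∑ e ∈ Ed, Wt e) Wt le_rfl
  have hMtEd : ∀ et ∈ Mt, gedge bu bv et := fun et h => (Finset.mem_filter.1 (hMtE h)).2
  -- genuine copies
  set genU : U → Finset (Fin (Fintype.card V)) :=
    fun u => Finset.univ.filter (fun i => (i : ℕ) < bu u) with hgenU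
  set genV : V → Finset (Fin (Fintype.card U)) :=
    fun v => Finset.univ.filter (fun j => (j : ℕ) < bv v) with hgenV
  have hgenUcard : ∀ u, (genU u).card = bu u := by
    intro u
    have h : genU u = Finset.univ.image (Fin.castLE (hbu' u)) := by
      ext i
      simp only [hgenU, Finset.mem_filter, Finset.mem_univ, true_and, Finset.mem_image]
      constructor
      · intro hi; exact ⟨⟨(i : ℕ), hi⟩, rfl⟩
      · rintro ⟨j, rfl⟩; exact j.isLt
    rw [h, Finset.card_image_of_injective _ (Fin.castLE_injective _), Finset.card_univ,
      Fintype.card_fin]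
  have hgenVcard : ∀ v, (genV v).card = bv v := by
    intro v
    have h : genV v = Finset.univ.image (Fin.castLE (hbv' v)) := by
      ext j
      simp only [hgenV, Finset.mem_filter, Finset.mem_univ, true_and, Finset.mem_image]
      constructor
      · intro hj; exact ⟨⟨(j : ℕ), hj⟩, rfl⟩
      · rintro ⟨j, rfl⟩; exact j.isLt
    rw [h, Finset.card_image_of_injective _ (Fin.castLE_injective _), Finset.card_univ,
      Fintype.card_fin]
  have hneU : ∀ u, (genU u).Nonempty := by
    intro u
    refine ⟨⟨0, hnV⟩, ?_⟩
    simp only [hgenU, Finset.mem_filter, Finset.mem_univ, true_and]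
    exact hbu u
  have hneV : ∀ v, (genV v).Nonempty := by
    intro v
    refine ⟨⟨0, hnU⟩, ?_⟩
    simp only [hgenV, Finset.mem_filter, Finset.mem_univ, true_and]
    exact hbv v
  -- duals
  set yU : U → ℕ := fun u => (genU u).inf' (hneU u) (fun i => yA (Sum.inl (u, i))) with hyU
  set yV : V → ℕ := fun v => (genV v).inf' (hneV v) (fun j => yB (Sum.inl (v, j))) with hyV
  set z : U → V → ℕ :=
    fun u v => yA (Sum.inr (u, v)) + yB (Sum.inr (u, v)) - WN u v with hz
  -- edges of the gadget graph
  have hmid : ∀ u v, ((Sum.inr (u, v), Sum.inr (u, v)) :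
      ((U × Fin (Fintype.card V)) ⊕ (U × V)) × ((V × Fin (Fintype.card U)) ⊕ (U × V))) ∈ Ed := by
    intro u v
    simp only [hEd, Finset.mem_filter, Finset.mem_univ, true_and]
    show (u, v) = (u, v)
    rfl
  have hleft : ∀ u v (i : Fin (Fintype.card V)), (i : ℕ) < bu u →
      ((Sum.inl (u, i), Sum.inr (u, v)) :
      ((U × Fin (Fintype.card V)) ⊕ (U × V)) × ((V × Fin (Fintype.card U)) ⊕ (U × V))) ∈ Ed := by
    intro u v i hi
    simp only [hEd, Finset.mem_filter, Finset.mem_univ, true_and]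
    exact ⟨rfl, hi⟩
  have hright : ∀ u v (j : Fin (Fintype.card U)), (j : ℕ) < bv v →
      ((Sum.inr (u, v), Sum.inl (v, j)) :
      ((U × Fin (Fintype.card V)) ⊕ (U × V)) × ((V × Fin (Fintype.card U)) ⊕ (U × V))) ∈ Ed := by
    intro u v j hj
    simp only [hEd, Finset.mem_filter, Finset.mem_univ, true_and]
    exact ⟨rfl, hj⟩
  -- feasibility facts
  have hfmid : ∀ u v, WN u v ≤ yA (Sum.inr (u, v)) + yB (Sum.inr (u, v)) := by
    intro u v
    have := hfeas _ (hmid u v)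
    simpa [hWt, gpr] using this
  have hfU : ∀ u v, WN u v ≤ yU u + yB (Sum.inr (u, v)) := by
    intro u v
    obtain ⟨i₀, hi₀, hieq⟩ := Finset.exists_mem_eq_inf' (hneU u) (fun i => yA (Sum.inl (u, i)))
    have hi₀' : (i₀ : ℕ) < bu u := by
      have := hi₀
      simp only [hgenU, Finset.mem_filter, Finset.mem_univ, true_and] at this
      exact this
    have h := hfeas _ (hleft u v i₀ hi₀')
    simp only [hWt, gpr] at h
    rw [hyU]
    dsimp only
    rw [hieq]
    exact h
  have hfV : ∀ u v, WN u v ≤ yA (Sum.inr (u, v)) + yV v := by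
    intro u v
    obtain ⟨j₀, hj₀, hjeq⟩ := Finset.exists_mem_eq_inf' (hneV v) (fun j => yB (Sum.inl (v, j)))
    have hj₀' : (j₀ : ℕ) < bv v := by
      have := hj₀
      simp only [hgenV, Finset.mem_filter, Finset.mem_univ, true_and] at this
      exact this
    have h := hfeas _ (hright u v j₀ hj₀')
    simp only [hWt, gpr] at h
    rw [hyV]
    dsimp only
    rw [hjeq]
    exact h
  -- the extracted matching
  set M : Finset (U × V) := Finset.univ.filter (fun p =>
      (∃ i, (Sum.inl (p.1, i), Sum.inr p) ∈ Mt) ∧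
      (∃ j, (Sum.inr p, Sum.inl (p.2, j)) ∈ Mt)) with hM
  have hfeasN : ∀ u v, WN u v ≤ yU u + yV v + z u v := by
    intro u v
    have h1 := hfU u v
    have h2 := hfV u v
    have h3 := hfmid u v
    rw [hz]
    dsimp only
    omega
  have hdegU : ∀ u, (M.filter fun e => e.1 = u).card ≤ bu u := by
    intro u
    set F : U × V → Fin (Fintype.card V) := fun p =>
      if h : ∃ i, (Sum.inl (p.1, i), Sum.inr p) ∈ Mt then h.choose else ⟨0, hnV⟩ with hF
    have key : ∀ p ∈ M.filter (fun e => e.1 = u), F p ∈ genU u ∧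
        (Sum.inl (u, F p), Sum.inr p) ∈ Mt := by
      intro p hp
      rcases Finset.mem_filter.1 hp with ⟨hpM, hpu⟩
      rcases Finset.mem_filter.1 hpM with ⟨-, ⟨hex, -⟩⟩
      have hFp : F p = hex.choose := by rw [hF]; dsimp only; rw [dif_pos hex]
      have hmem := hex.choose_spec
      have hg := hMtEd _ hmem
      simp only [gedge] at hg
      constructor
      · simp only [hgenU, Finset.mem_filter, Finset.mem_univ, true_and]
        rw [hFp, ← hpu]
        exact hg.2
      · rw [hFp, ← hpu]
        exact hmem
    calc (M.filter fun e => e.1 = u).card ≤ (genU u).card := by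
          refine Finset.card_le_card_of_injOn F (fun p hp => (key p hp).1) ?_
          intro p hp q hq hpq
          have h1 := (key p hp).2
          have h2 := (key q hq).2
          rw [hpq] at h1
          have := hMtM.1 _ h1 _ h2 rfl
          exact Sum.inr.inj (congrArg Prod.snd this)
      _ = bu u := hgenUcard u
  have hdegV : ∀ v, (M.filter fun e => e.2 = v).card ≤ bv v := by
    intro v
    set F : U × V → Fin (Fintype.card U) := fun p =>
      if h : ∃ j, (Sum.inr p, Sum.inl (p.2, j)) ∈ Mt then h.choose else ⟨0, hnU⟩ with hF
    have key : ∀ p ∈ M.filter (fun e => e.2 = v), F p ∈ genV v ∧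
        (Sum.inr p, Sum.inl (v, F p)) ∈ Mt := by
      intro p hp
      rcases Finset.mem_filter.1 hp with ⟨hpM, hpv⟩
      rcases Finset.mem_filter.1 hpM with ⟨-, ⟨-, hex⟩⟩
      have hFp : F p = hex.choose := by rw [hF]; dsimp only; rw [dif_pos hex]
      have hmem := hex.choose_spec
      have hg := hMtEd _ hmem
      simp only [gedge] at hg
      constructor
      · simp only [hgenV, Finset.mem_filter, Finset.mem_univ, true_and]
        rw [hFp, ← hpv]
        exact hg.2
      · rw [hFp, ← hpv]
        exact hmem
    calc (M.filter fun e => e.2 = v).card ≤ (genV v).card := by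
          refine Finset.card_le_card_of_injOn F (fun p hp => (key p hp).1) ?_
          intro p hp q hq hpq
          have h1 := (key p hp).2
          have h2 := (key q hq).2
          rw [hpq] at h1
          have := hMtM.2 _ h1 _ h2 rfl
          exact Sum.inr.inj (congrArg Prod.fst this)
      _ = bv v := hgenVcard v
  refine ⟨yU, yV, z, M, hfeasN, hdegU, hdegV, ?_⟩
  have hd1 : ∑ e ∈ M, WN e.1 e.2 ≤
      (∑ u, bu u * yU u) + (∑ v, bv v * yV v) + ∑ u, ∑ v, z u v := by
    have step1 : ∑ e ∈ M, WN e.1 e.2 ≤ ∑ e ∈ M, (yU e.1 + (yV e.2 + z e.1 e.2)) :=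
      Finset.sum_le_sum fun e _ => by have := hfeasN e.1 e.2; omega
    rw [Finset.sum_add_distrib, Finset.sum_add_distrib] at step1
    have step2 : ∑ e ∈ M, yU e.1 ≤ ∑ u, bu u * yU u := by
      rw [group_fst M yU]
      exact Finset.sum_le_sum fun u _ => by
        rw [smul_eq_mul]; exact Nat.mul_le_mul_right _ (hdegU u)
    have step3 : ∑ e ∈ M, yV e.2 ≤ ∑ v, bv v * yV v := by
      rw [group_snd M yV]
      exact Finset.sum_le_sum fun v _ => by
        rw [smul_eq_mul]; exact Nat.mul_le_mul_right _ (hdegV v)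
    have step4 : ∑ e ∈ M, z e.1 e.2 ≤ ∑ u, ∑ v, z u v := by
      have h1 : ∑ e ∈ M, z e.1 e.2 ≤ ∑ e : U × V, z e.1 e.2 :=
        Finset.sum_le_sum_of_subset (Finset.subset_univ M)
      rwa [Fintype.sum_prod_type] at h1
    omega
  have hd2 : (∑ u, bu u * yU u) + (∑ v, bv v * yV v) + (∑ u, ∑ v, z u v) ≤
      ∑ e ∈ M, WN e.1 e.2 := by
    have hstepA : ∑ u, bu u * yU u ≤ ∑ c : U × Fin (Fintype.card V), yA (Sum.inl c) := by
      have h1 : ∀ u, bu u * yU u ≤ ∑ i ∈ genU u, yA (Sum.inl (u, i)) := by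
        intro u
        have := Finset.card_nsmul_le_sum (genU u) (fun i => yA (Sum.inl (u, i))) (yU u)
          (fun i hi => Finset.inf'_le _ hi)
        rwa [hgenUcard u, smul_eq_mul] at this
      calc ∑ u, bu u * yU u ≤ ∑ u, ∑ i ∈ genU u, yA (Sum.inl (u, i)) :=
            Finset.sum_le_sum fun u _ => h1 u
        _ ≤ ∑ u, ∑ i : Fin (Fintype.card V), yA (Sum.inl (u, i)) :=
            Finset.sum_le_sum fun u _ =>
              Finset.sum_le_sum_of_subset (Finset.subset_univ _)
        _ = ∑ c : U × Fin (Fintype.card V), yA (Sum.inl c) := by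
            rw [Fintype.sum_prod_type]
    have hstepB : ∑ v, bv v * yV v ≤ ∑ c : V × Fin (Fintype.card U), yB (Sum.inl c) := by
      have h1 : ∀ v, bv v * yV v ≤ ∑ j ∈ genV v, yB (Sum.inl (v, j)) := by
        intro v
        have := Finset.card_nsmul_le_sum (genV v) (fun j => yB (Sum.inl (v, j))) (yV v)
          (fun j hj => Finset.inf'_le _ hj)
        rwa [hgenVcard v, smul_eq_mul] at this
      calc ∑ v, bv v * yV v ≤ ∑ v, ∑ j ∈ genV v, yB (Sum.inl (v, j)) :=
            Finset.sum_le_sum fun v _ => h1 v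
        _ ≤ ∑ v, ∑ j : Fin (Fintype.card U), yB (Sum.inl (v, j)) :=
            Finset.sum_le_sum fun v _ =>
              Finset.sum_le_sum_of_subset (Finset.subset_univ _)
        _ = ∑ c : V × Fin (Fintype.card U), yB (Sum.inl c) := by
            rw [Fintype.sum_prod_type]
    have hstepZ : (∑ u, ∑ v, z u v) + (∑ u, ∑ v, WN u v) ≤
        (∑ p : U × V, yA (Sum.inr p)) + ∑ p : U × V, yB (Sum.inr p) := by
      have h1 : ∀ p : U × V, z p.1 p.2 + WN p.1 p.2 ≤ yA (Sum.inr p) + yB (Sum.inr p) := by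
        rintro ⟨u, v⟩
        have h2 := hfmid u v
        rw [hz]
        dsimp only
        omega
      calc (∑ u, ∑ v, z u v) + (∑ u, ∑ v, WN u v)
          = ∑ p : U × V, (z p.1 p.2 + WN p.1 p.2) := by
            rw [Finset.sum_add_distrib, Fintype.sum_prod_type, Fintype.sum_prod_type]
        _ ≤ ∑ p : U × V, (yA (Sum.inr p) + yB (Sum.inr p)) := Finset.sum_le_sum fun p _ => h1 p
        _ = _ := Finset.sum_add_distrib
    have hAB : (∑ a, yA a) + (∑ b, yB b) =
        ((∑ c : U × Fin (Fintype.card V), yA (Sum.inl c)) + ∑ p : U × V, yA (Sum.inr p)) +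
        ((∑ c : V × Fin (Fintype.card U), yB (Sum.inl c)) + ∑ p : U × V, yB (Sum.inr p)) := by
      rw [Fintype.sum_sum_type, Fintype.sum_sum_type]
    have hcount : ∑ e ∈ Mt, Wt e ≤ (∑ u, ∑ v, WN u v) + ∑ e ∈ M, WN e.1 e.2 := by
      rw [← Finset.sum_fiberwise Mt gpr Wt]
      have hper : ∀ p : U × V, ∑ et ∈ Mt.filter (fun et => gpr et = p), Wt et ≤
          WN p.1 p.2 + (if p ∈ M then WN p.1 p.2 else 0) := by
        intro p
        set S := Mt.filter (fun et => gpr et = p) with hS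
        have hSsum : ∑ et ∈ S, Wt et = S.card * WN p.1 p.2 := by
          have hc : ∀ et ∈ S, Wt et = WN p.1 p.2 := by
            intro et het
            rw [hWt]
            dsimp only
            rw [(Finset.mem_filter.1 het).2]
          rw [Finset.sum_congr rfl hc, Finset.sum_const, smul_eq_mul]
        have hSMt : ∀ et ∈ S, et ∈ Mt := fun et het => (Finset.mem_filter.1 het).1
        have hS2 : ∀ et ∈ S, et.2 = Sum.inr p ∨ et.1 = Sum.inr p := by
          intro et het
          rcases Finset.mem_filter.1 het with ⟨hetMt, hetp⟩
          have hg := hMtEd _ hetMt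
          rcases et with ⟨x | q, y | q'⟩
          · exact absurd hg (by simp [gedge])
          · left
            simp only [gpr] at hetp
            rw [hetp]
          · right
            simp only [gpr] at hetp
            rw [hetp]
          · left
            simp only [gpr] at hetp
            rw [hetp]
        by_cases hpM : p ∈ M
        · have hcard : S.card ≤ 2 := by
            have hsub : S ⊆ S.filter (fun et => et.2 = Sum.inr p) ∪
                S.filter (fun et => et.1 = Sum.inr p) := by
              intro et het
              rcases hS2 et het with h | h
              · exact Finset.mem_union_left _ (Finset.mem_filter.2 ⟨het, h⟩)
              · exact Finset.mem_union_right _ (Finset.mem_filter.2 ⟨het, h⟩)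
            have hc1 : (S.filter (fun et => et.2 = Sum.inr p)).card ≤ 1 := by
              refine Finset.card_le_one.2 fun et het ft hft => ?_
              rcases Finset.mem_filter.1 het with ⟨het', h2⟩
              rcases Finset.mem_filter.1 hft with ⟨hft', g2⟩
              exact hMtM.2 _ (hSMt _ het') _ (hSMt _ hft') (h2.trans g2.symm)
            have hc2 : (S.filter (fun et => et.1 = Sum.inr p)).card ≤ 1 := by
              refine Finset.card_le_one.2 fun et het ft hft => ?_
              rcases Finset.mem_filter.1 het with ⟨het', h1⟩
              rcases Finset.mem_filter.1 hft with ⟨hft', g1⟩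
              exact hMtM.1 _ (hSMt _ het') _ (hSMt _ hft') (h1.trans g1.symm)
            calc S.card ≤ (S.filter (fun et => et.2 = Sum.inr p) ∪
                S.filter (fun et => et.1 = Sum.inr p)).card := Finset.card_le_card hsub
              _ ≤ _ + _ := Finset.card_union_le _ _
              _ ≤ 2 := by omega
          rw [hSsum, if_pos hpM]
          have := Nat.mul_le_mul_right (WN p.1 p.2) hcard
          omega
        · have hkey : ∀ et ∈ S, ∀ ft ∈ S, et.2 = Sum.inr p → ft.1 = Sum.inr p → et = ft := by
            intro et het ft hft h2 g1
            by_cases hm : et.1 = Sum.inr p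
            · exact hMtM.1 _ (hSMt _ het) _ (hSMt _ hft) (hm.trans g1.symm)
            · by_cases hm' : ft.2 = Sum.inr p
              · exact hMtM.2 _ (hSMt _ het) _ (hSMt _ hft) (h2.trans hm'.symm)
              · exfalso
                apply hpM
                have hgl := hMtEd _ (hSMt _ het)
                have hgr := hMtEd _ (hSMt _ hft)
                have hex1 : ∃ i, (Sum.inl (p.1, i), Sum.inr p) ∈ Mt := by
                  obtain ⟨etl, etr⟩ := et
                  rcases etl with x | q <;> rcases etr with y | q'
                  · exact absurd hgl (by simp [gedge])
                  · have hq' : q' = p := Sum.inr.inj h2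
                    simp only [gedge] at hgl
                    refine ⟨x.2, ?_⟩
                    rw [← hq', hgl.1, Prod.mk.eta]
                    exact hSMt _ het
                  · exact absurd h2 (by simp)
                  · exfalso
                    have hq' : q' = p := Sum.inr.inj h2
                    have hq : q = q' := hgl
                    exact hm (by show Sum.inr q = Sum.inr p; rw [hq, hq'])
                have hex2 : ∃ j, (Sum.inr p, Sum.inl (p.2, j)) ∈ Mt := by
                  obtain ⟨ftl, ftr⟩ := ft
                  rcases ftl with x | q <;> rcases ftr with y | q'
                  · exact absurd hgr (by simp [gedge])
                  · exact absurd g1 (by simp)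
                  · have hq : q = p := Sum.inr.inj g1
                    simp only [gedge] at hgr
                    refine ⟨y.2, ?_⟩
                    rw [← hq, hgr.1, Prod.mk.eta]
                    exact hSMt _ hft
                  · exfalso
                    have hq : q = p := Sum.inr.inj g1
                    have hq' : q = q' := hgr
                    exact hm' (by show Sum.inr q' = Sum.inr p; rw [← hq', hq])
                rw [hM]
                exact Finset.mem_filter.2 ⟨Finset.mem_univ _, hex1, hex2⟩
          have hcard : S.card ≤ 1 := by
            refine Finset.card_le_one.2 fun et het ft hft => ?_
            rcases hS2 et het with h2 | h1 <;> rcases hS2 ft hft with g2 | g1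
            · exact hMtM.2 _ (hSMt _ het) _ (hSMt _ hft) (h2.trans g2.symm)
            · exact hkey et het ft hft h2 g1
            · exact (hkey ft hft et het g2 h1).symm
            · exact hMtM.1 _ (hSMt _ het) _ (hSMt _ hft) (h1.trans g1.symm)
          rw [hSsum, if_neg hpM]
          have := Nat.mul_le_mul_right (WN p.1 p.2) hcard
          omega
      calc ∑ p : U × V, ∑ et ∈ Mt.filter (fun et => gpr et = p), Wt et
          ≤ ∑ p : U × V, (WN p.1 p.2 + (if p ∈ M then WN p.1 p.2 else 0)) :=
            Finset.sum_le_sum fun p _ => hper p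
        _ = (∑ p : U × V, WN p.1 p.2) + ∑ p : U × V, (if p ∈ M then WN p.1 p.2 else 0) :=
            Finset.sum_add_distrib
        _ = (∑ u, ∑ v, WN u v) + ∑ e ∈ M, WN e.1 e.2 := by
            rw [Fintype.sum_prod_type]
            congr 1
            rw [Finset.sum_ite_mem, Finset.univ_inter]
    have hfin := heq
    omega
  omega

end Gadget


variable {U V : Type*} [Fintype U] [Fintype V] [Nonempty U] [Nonempty V]
  [DecidableEq U] [DecidableEq V]

/-- A nodes-core solution always exists: a nonnegative node
allocation together with a `B`-matching such that each coalition's total allocation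
is at least the maximum `B`-matching value over the coalition, and the grand total
allocation equals the maximum `B`-matching value over `G`, which is achieved by `M`. -/
theorem exists_nodesCore (W : U → V → ℚ) (hW : ∀ u v, 0 ≤ W u v)
    (BU : U → ℤ) (BV : V → ℤ) (hBU : ∀ u, 1 ≤ BU u) (hBV : ∀ v, 1 ≤ BV v) :
    ∃ (xU : U → ℚ) (xV : V → ℚ) (M : Finset (U × V)),
      (∀ u, 0 ≤ xU u) ∧ (∀ v, 0 ≤ xV v) ∧ IsBMatching BU BV M ∧
      (∀ (SU : Finset U) (SV : Finset V),
        ∀ t ∈ matchingValues W BU BV SU SV, t ≤ ∑ u ∈ SU, xU u + ∑ v ∈ SV, xV v) ∧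
      IsGreatest (matchingValues W BU BV Finset.univ Finset.univ)
        (∑ u : U, xU u + ∑ v : V, xV v) ∧
      ∑ e ∈ M, W e.1 e.2 = ∑ u : U, xU u + ∑ v : V, xV v := by
  classical
  -- scale the weights to natural numbers
  set Nn : ℕ := ∏ u : U, ∏ v : V, (W u v).den with hNn
  have hNpos : 0 < Nn := Finset.prod_pos fun u _ => Finset.prod_pos fun v _ => (W u v).pos
  have hdvd : ∀ u v, (W u v).den ∣ Nn := by
    intro u v
    calc (W u v).den ∣ ∏ v : V, (W u v).den := Finset.dvd_prod_of_mem _ (Finset.mem_univ v)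
      _ ∣ Nn := Finset.dvd_prod_of_mem (fun u => ∏ v : V, (W u v).den) (Finset.mem_univ u)
  set WN : U → V → ℕ := fun u v => (W u v).num.toNat * (Nn / (W u v).den) with hWN
  have hWNval : ∀ u v, ((WN u v : ℚ)) = W u v * (Nn : ℚ) := by
    intro u v
    obtain ⟨k, hk⟩ := hdvd u v
    have hk' : Nn / (W u v).den = k := by rw [hk]; exact Nat.mul_div_cancel_left _ (W u v).pos
    have hnum : ((W u v).num.toNat : ℚ) = ((W u v).num : ℚ) := by
      exact_mod_cast congrArg (fun n : ℤ => (n : ℚ))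
        (Int.toNat_of_nonneg (Rat.num_nonneg.2 (hW u v)))
    have hd0 : ((W u v).den : ℚ) ≠ 0 := Nat.cast_ne_zero.2 (W u v).pos.ne'
    have hden : W u v * ((W u v).den : ℚ) = ((W u v).num : ℚ) := by
      have hq := Rat.num_div_den (W u v)
      calc W u v * ((W u v).den : ℚ)
          = (((W u v).num : ℚ) / ((W u v).den : ℚ)) * ((W u v).den : ℚ) := by rw [hq]
        _ = ((W u v).num : ℚ) := div_mul_cancel₀ _ hd0
    calc ((WN u v : ℚ)) = ((W u v).num.toNat : ℚ) * ((Nn / (W u v).den : ℕ) : ℚ) := by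
          rw [hWN]; push_cast; ring
      _ = ((W u v).num : ℚ) * (k : ℚ) := by rw [hnum, hk']
      _ = (W u v * ((W u v).den : ℚ)) * (k : ℚ) := by rw [hden]
      _ = W u v * (((W u v).den * k : ℕ) : ℚ) := by push_cast; ring
      _ = W u v * (Nn : ℚ) := by rw [← hk]
  -- capped capacities
  set bu : U → ℕ := fun u => min (BU u).toNat (Fintype.card V) with hbu
  set bv : V → ℕ := fun v => min (BV v).toNat (Fintype.card U) with hbv
  have hcardV : 0 < Fintype.card V := Fintype.card_pos
  have hcardU : 0 < Fintype.card U := Fintype.card_pos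
  have hbupos : ∀ u, 0 < bu u := fun u => by have := hBU u; rw [hbu]; dsimp only; omega
  have hbvpos : ∀ v, 0 < bv v := fun v => by have := hBV v; rw [hbv]; dsimp only; omega
  have hbu' : ∀ u, bu u ≤ Fintype.card V := fun u => by rw [hbu]; dsimp only; omega
  have hbv' : ∀ v, bv v ≤ Fintype.card U := fun v => by rw [hbv]; dsimp only; omega
  have hbuBU : ∀ u, (bu u : ℤ) ≤ BU u := fun u => by
    have := hBU u; rw [hbu]; dsimp only; push_cast; omega
  have hbvBV : ∀ v, (bv v : ℤ) ≤ BV v := fun v => by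
    have := hBV v; rw [hbv]; dsimp only; push_cast; omega
  -- bounded degrees
  have hdegVcard : ∀ (M₀ : Finset (U × V)) (u : U),
      (M₀.filter fun e => e.1 = u).card ≤ Fintype.card V := by
    intro M₀ u
    have h := Finset.card_le_card_of_injOn (f := Prod.snd)
      (s := M₀.filter fun e => e.1 = u) (t := Finset.univ) (fun e _ => Finset.mem_univ _) ?_
    · rwa [Finset.card_univ] at h
    · intro e he f hf h2
      rcases Finset.mem_filter.1 he with ⟨-, h3⟩
      rcases Finset.mem_filter.1 hf with ⟨-, h4⟩
      exact Prod.ext (h3.trans h4.symm) h2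
  have hdegUcard : ∀ (M₀ : Finset (U × V)) (v : V),
      (M₀.filter fun e => e.2 = v).card ≤ Fintype.card U := by
    intro M₀ v
    have h := Finset.card_le_card_of_injOn (f := Prod.fst)
      (s := M₀.filter fun e => e.2 = v) (t := Finset.univ) (fun e _ => Finset.mem_univ _) ?_
    · rwa [Finset.card_univ] at h
    · intro e he f hf h2
      rcases Finset.mem_filter.1 he with ⟨-, h3⟩
      rcases Finset.mem_filter.1 hf with ⟨-, h4⟩
      exact Prod.ext h2 (h3.trans h4.symm)
  have hBMnat : ∀ M₀ : Finset (U × V), IsBMatching BU BV M₀ →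
      (∀ u, (M₀.filter fun e => e.1 = u).card ≤ bu u) ∧
      (∀ v, (M₀.filter fun e => e.2 = v).card ≤ bv v) := by
    intro M₀ hbm
    constructor
    · intro u
      have h1 := hbm.1 u
      have h2 := hdegVcard M₀ u
      rw [hbu]; dsimp only; omega
    · intro v
      have h1 := hbm.2 v
      have h2 := hdegUcard M₀ v
      rw [hbv]; dsimp only; omega
  -- the natural-number dual solution
  obtain ⟨yU, yV, z, M, hfeasN, hdegU, hdegV, heqN⟩ :=
    exists_nat_dual WN bu bv hbupos hbvpos hbu' hbv'
  -- the allocation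
  set xU : U → ℚ := fun u => ((bu u * yU u + ∑ v, z u v : ℕ) : ℚ) * (Nn : ℚ)⁻¹ with hxU
  set xV : V → ℚ := fun v => ((bv v * yV v : ℕ) : ℚ) * (Nn : ℚ)⁻¹ with hxV
  have hNinv : (0:ℚ) ≤ (Nn : ℚ)⁻¹ := inv_nonneg.2 (by positivity)
  have hNne : (Nn : ℚ) ≠ 0 := Nat.cast_ne_zero.2 hNpos.ne'
  have hWq : ∀ u v, W u v = ((WN u v : ℕ) : ℚ) * (Nn:ℚ)⁻¹ := by
    intro u v
    rw [hWNval u v, mul_assoc, mul_inv_cancel₀ hNne, mul_one]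
  have hlhs : ∀ M₀ : Finset (U × V),
      ∑ e ∈ M₀, W e.1 e.2 = ((∑ e ∈ M₀, WN e.1 e.2 : ℕ) : ℚ) * (Nn:ℚ)⁻¹ := by
    intro M₀
    rw [Nat.cast_sum, Finset.sum_mul]
    exact Finset.sum_congr rfl fun e _ => hWq e.1 e.2
  have hsumxU : ∀ SU : Finset U,
      ∑ u ∈ SU, xU u = ((∑ u ∈ SU, (bu u * yU u + ∑ v, z u v) : ℕ) : ℚ) * (Nn:ℚ)⁻¹ := by
    intro SU
    rw [Nat.cast_sum, Finset.sum_mul]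
  have hsumxV : ∀ SV : Finset V,
      ∑ v ∈ SV, xV v = ((∑ v ∈ SV, bv v * yV v : ℕ) : ℚ) * (Nn:ℚ)⁻¹ := by
    intro SV
    rw [Nat.cast_sum, Finset.sum_mul]
  -- coalition bound
  have key : ∀ (SU : Finset U) (SV : Finset V) (M₀ : Finset (U × V)), M₀ ⊆ SU ×ˢ SV →
      IsBMatching BU BV M₀ → ∑ e ∈ M₀, W e.1 e.2 ≤ ∑ u ∈ SU, xU u + ∑ v ∈ SV, xV v := by
    intro SU SV M₀ hsub hbm
    obtain ⟨hdu, hdv⟩ := hBMnat M₀ hbm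
    have hnat : ∑ e ∈ M₀, WN e.1 e.2 ≤
        (∑ u ∈ SU, (bu u * yU u + ∑ v, z u v)) + ∑ v ∈ SV, bv v * yV v := by
      have step1 : ∑ e ∈ M₀, WN e.1 e.2 ≤ ∑ e ∈ M₀, (yU e.1 + (yV e.2 + z e.1 e.2)) :=
        Finset.sum_le_sum fun e _ => by have := hfeasN e.1 e.2; omega
      rw [Finset.sum_add_distrib, Finset.sum_add_distrib] at step1
      have hA : ∑ e ∈ M₀, yU e.1 ≤ ∑ u ∈ SU, bu u * yU u := by
        rw [group_fst M₀ yU]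
        have hzero : ∀ u ∈ Finset.univ, u ∉ SU →
            (M₀.filter fun e => e.1 = u).card • yU u = 0 := by
          intro u _ hu
          have hemp : (M₀.filter fun e => e.1 = u) = ∅ := by
            refine Finset.filter_eq_empty_iff.2 fun e he => ?_
            intro h
            exact hu (h ▸ (Finset.mem_product.1 (hsub he)).1)
          rw [hemp]
          simp
        rw [← Finset.sum_subset (Finset.subset_univ SU) hzero]
        exact Finset.sum_le_sum fun u _ => by
          rw [smul_eq_mul]; exact Nat.mul_le_mul_right _ (hdu u)
      have hB : ∑ e ∈ M₀, yV e.2 ≤ ∑ v ∈ SV, bv v * yV v := by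
        rw [group_snd M₀ yV]
        have hzero : ∀ v ∈ Finset.univ, v ∉ SV →
            (M₀.filter fun e => e.2 = v).card • yV v = 0 := by
          intro v _ hv
          have hemp : (M₀.filter fun e => e.2 = v) = ∅ := by
            refine Finset.filter_eq_empty_iff.2 fun e he => ?_
            intro h
            exact hv (h ▸ (Finset.mem_product.1 (hsub he)).2)
          rw [hemp]
          simp
        rw [← Finset.sum_subset (Finset.subset_univ SV) hzero]
        exact Finset.sum_le_sum fun v _ => by
          rw [smul_eq_mul]; exact Nat.mul_le_mul_right _ (hdv v)
      have hZ : ∑ e ∈ M₀, z e.1 e.2 ≤ ∑ u ∈ SU, ∑ v, z u v := by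
        have h1 : M₀ ⊆ SU ×ˢ (Finset.univ : Finset V) :=
          hsub.trans (Finset.product_subset_product (Finset.Subset.refl _) (Finset.subset_univ _))
        calc ∑ e ∈ M₀, z e.1 e.2 ≤ ∑ e ∈ SU ×ˢ (Finset.univ : Finset V), z e.1 e.2 :=
              Finset.sum_le_sum_of_subset h1
          _ = ∑ u ∈ SU, ∑ v, z u v := by
              exact Finset.sum_product SU Finset.univ (fun e => z e.1 e.2)
      have := Finset.sum_add_distrib (s := SU)
        (f := fun u => bu u * yU u) (g := fun u => ∑ v, z u v)
      omega
    rw [hlhs M₀, hsumxU SU, hsumxV SV, ← add_mul, ← Nat.cast_add]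
    exact mul_le_mul_of_nonneg_right (by exact_mod_cast hnat) hNinv
  -- grand total equality
  have hN3 : (∑ u, (bu u * yU u + ∑ v, z u v)) + ∑ v, bv v * yV v = ∑ e ∈ M, WN e.1 e.2 := by
    have := Finset.sum_add_distrib (s := (Finset.univ : Finset U))
      (f := fun u => bu u * yU u) (g := fun u => ∑ v, z u v)
    omega
  have htot : ∑ e ∈ M, W e.1 e.2 = ∑ u : U, xU u + ∑ v : V, xV v := by
    rw [hlhs M, hsumxU Finset.univ, hsumxV Finset.univ, ← add_mul, ← Nat.cast_add, hN3]
  -- M is a B-matching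
  have hMB : IsBMatching BU BV M := by
    constructor
    · intro u
      calc ((M.filter fun e => e.1 = u).card : ℤ) ≤ (bu u : ℤ) := by exact_mod_cast hdegU u
        _ ≤ BU u := hbuBU u
    · intro v
      calc ((M.filter fun e => e.2 = v).card : ℤ) ≤ (bv v : ℤ) := by exact_mod_cast hdegV v
        _ ≤ BV v := hbvBV v
  refine ⟨xU, xV, M, ?_, ?_, hMB, ?_, ⟨?_, ?_⟩, htot⟩
  · intro u
    rw [hxU]
    exact mul_nonneg (Nat.cast_nonneg _) hNinv
  · intro v
    rw [hxV]
    exact mul_nonneg (Nat.cast_nonneg _) hNinv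
  · rintro SU SV t ⟨M₀, h1, h2, rfl⟩
    exact key SU SV M₀ h1 h2
  · exact ⟨M, by rw [Finset.univ_product_univ]; exact Finset.subset_univ M, hMB, htot.symm⟩
  · rintro t ⟨M₀, h1, h2, rfl⟩
    exact key Finset.univ Finset.univ M₀ h1 h2
end

section
/- Let ε > 0 be a rational number such that every weight W(u,v) is an integer multiple of ε. Then there exists a copies-core solution (a, 𝓜) in which every aspiration a_{g,k} is a nonnegative integer multiple of ε. -/
open Finset

set_option linter.unusedSectionVars false

section CoreComb

variable {U V : Type*} [Fintype U] [Fintype V] [DecidableEq U] [DecidableEq V]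

def degA (M : Finset (U × V)) (u : U) : ℕ := (M.filter fun e => e.1 = u).card

def degB (M : Finset (U × V)) (v : V) : ℕ := (M.filter fun e => e.2 = v).card

lemma degA_insert {M : Finset (U × V)} {e : U × V} (he : e ∉ M) (u : U) :
    degA (insert e M) u = degA M u + (if u = e.1 then 1 else 0) := by
  unfold degA
  rw [filter_insert]
  split_ifs with h1 h2 h2
  · rw [card_insert_of_notMem (fun hc => he (mem_filter.1 hc).1)]
  · exact absurd h1.symm h2
  · exact absurd h2.symm h1
  · rfl

lemma degB_insert {M : Finset (U × V)} {e : U × V} (he : e ∉ M) (v : V) :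
    degB (insert e M) v = degB M v + (if v = e.2 then 1 else 0) := by
  unfold degB
  rw [filter_insert]
  split_ifs with h1 h2 h2
  · rw [card_insert_of_notMem (fun hc => he (mem_filter.1 hc).1)]
  · exact absurd h1.symm h2
  · exact absurd h2.symm h1
  · rfl

lemma degA_erase {M : Finset (U × V)} {e : U × V} (he : e ∈ M) (u : U) :
    degA (M.erase e) u + (if u = e.1 then 1 else 0) = degA M u := by
  have h1 : degA (insert e (M.erase e)) u
      = degA (M.erase e) u + (if u = e.1 then 1 else 0) :=
    degA_insert (notMem_erase e M) u
  rw [insert_erase he] at h1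
  omega

lemma degB_erase {M : Finset (U × V)} {e : U × V} (he : e ∈ M) (v : V) :
    degB (M.erase e) v + (if v = e.2 then 1 else 0) = degB M v := by
  have h1 : degB (insert e (M.erase e)) v
      = degB (M.erase e) v + (if v = e.2 then 1 else 0) :=
    degB_insert (notMem_erase e M) v
  rw [insert_erase he] at h1
  omega

variable (M : Finset (U × V)) (tgt : U → V → Prop)

/-- Alternating path steps: from current node `u`, go to `v` along a tight unmatched
edge, then to `u'` along a tight matched edge. -/
def Steps : U → List (V × U) → Prop
  | _, [] => True
  | u, (v, u') :: l => tgt u v ∧ (u, v) ∉ M ∧ tgt u' v ∧ (u', v) ∈ M ∧ Steps u' l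

/-- Endpoint of a path. -/
def pend : U → List (V × U) → U
  | u, [] => u
  | _, (_, u') :: l => pend u' l

/-- The flipped matching along an alternating path. -/
def flipM : U → List (V × U) → Finset (U × V)
  | _, [] => M
  | u, (v, u') :: l => insert (u, v) ((flipM u' l).erase (u', v))

/-- The path is simple. -/
def SimpleP (u : U) (l : List (V × U)) : Prop :=
  (u :: l.map Prod.snd).Nodup ∧ (l.map Prod.fst).Nodup

lemma flipM_mem_notU (l : List (V × U)) : ∀ (u x : U) (y : V), x ≠ u →
    x ∉ l.map Prod.snd → ((x, y) ∈ flipM M u l ↔ (x, y) ∈ M) := by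
  induction l with
  | nil => intro u x y _ _; exact Iff.rfl
  | cons a l ih =>
    obtain ⟨v, u'⟩ := a
    intro u x y hxu hxl
    simp only [List.map_cons, List.mem_cons, not_or] at hxl
    show (x, y) ∈ insert (u, v) ((flipM M u' l).erase (u', v)) ↔ _
    rw [mem_insert, mem_erase, ih u' x y hxl.1 hxl.2]
    constructor
    · rintro (h | ⟨_, h⟩)
      · exact absurd (congrArg Prod.fst h) hxu
      · exact h
    · intro h
      exact Or.inr ⟨fun hc => hxl.1 (congrArg Prod.fst hc), h⟩

lemma flipM_mem_notV (l : List (V × U)) : ∀ (u x : U) (y : V),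
    y ∉ l.map Prod.fst → ((x, y) ∈ flipM M u l ↔ (x, y) ∈ M) := by
  induction l with
  | nil => intro u x y _; exact Iff.rfl
  | cons a l ih =>
    obtain ⟨v, u'⟩ := a
    intro u x y hyl
    simp only [List.map_cons, List.mem_cons, not_or] at hyl
    show (x, y) ∈ insert (u, v) ((flipM M u' l).erase (u', v)) ↔ _
    rw [mem_insert, mem_erase, ih u' x y hyl.2]
    constructor
    · rintro (h | ⟨_, h⟩)
      · exact absurd (congrArg Prod.snd h) hyl.1
      · exact h
    · intro h
      exact Or.inr ⟨fun hc => hyl.1 (congrArg Prod.snd hc), h⟩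

lemma flipM_mem (l : List (V × U)) : ∀ u, Steps M tgt u l →
    ∀ e ∈ flipM M u l, e ∈ M ∨ tgt e.1 e.2 := by
  induction l with
  | nil => intro u _ e he; exact Or.inl he
  | cons a l ih =>
    obtain ⟨v, u'⟩ := a
    intro u hst e he
    obtain ⟨h1, h2, h3, h4, h5⟩ := hst
    rw [show flipM M u ((v, u') :: l) = insert (u, v) ((flipM M u' l).erase (u', v)) from rfl,
      mem_insert, mem_erase] at he
    rcases he with rfl | ⟨_, he⟩
    · exact Or.inr h1
    · exact ih u' h5 e he

lemma flipM_mem_of_mem (l : List (V × U)) : ∀ u, Steps M tgt u l →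
    ∀ e ∈ M, e ∉ flipM M u l → tgt e.1 e.2 := by
  induction l with
  | nil => intro u _ e he hne; exact absurd he hne
  | cons a l ih =>
    obtain ⟨v, u'⟩ := a
    intro u hst e he hne
    obtain ⟨h1, h2, h3, h4, h5⟩ := hst
    rw [show flipM M u ((v, u') :: l) = insert (u, v) ((flipM M u' l).erase (u', v)) from rfl,
      mem_insert, mem_erase] at hne
    push_neg at hne
    by_cases hc : e = (u', v)
    · rw [hc]; exact h3
    · exact ih u' h5 e he (hne.2 hc)

lemma simpleP_tail {u : U} {v : V} {u' : U} {l : List (V × U)}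
    (h : SimpleP u ((v, u') :: l)) : SimpleP u' l := by
  obtain ⟨h1, h2⟩ := h
  simp only [List.map_cons] at h1 h2
  exact ⟨(List.nodup_cons.1 h1).2, (List.nodup_cons.1 h2).2⟩

lemma flipM_degB (l : List (V × U)) : ∀ u, Steps M tgt u l → SimpleP u l →
    ∀ y, degB (flipM M u l) y = degB M y := by
  induction l with
  | nil => intro u _ _ y; rfl
  | cons a l ih =>
    obtain ⟨v, u'⟩ := a
    intro u hst hs y
    obtain ⟨h1, h2, h3, h4, h5⟩ := hst
    have hs' := simpleP_tail hs
    obtain ⟨hsU, hsV⟩ := hs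
    simp only [List.map_cons, List.nodup_cons, List.mem_cons, not_or] at hsU hsV
    have huX : (u, v) ∉ flipM M u' l := by
      rw [flipM_mem_notU M l u' u v hsU.1.1 hsU.1.2]; exact h2
    have hu'X : (u', v) ∈ flipM M u' l := by
      rw [flipM_mem_notV M l u' u' v hsV.1]; exact h4
    show degB (insert (u, v) ((flipM M u' l).erase (u', v))) y = degB M y
    rw [degB_insert (fun hc => huX (mem_of_mem_erase hc)) y]
    have her := degB_erase hu'X y
    have hX := ih u' h5 hs' y
    simp only at her hX ⊢
    omega

lemma flipM_degA (l : List (V × U)) : ∀ u, Steps M tgt u l → SimpleP u l →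
    ∀ x, degA (flipM M u l) x + (if x = pend u l then 1 else 0)
      = degA M x + (if x = u then 1 else 0) := by
  induction l with
  | nil => intro u _ _ x; rfl
  | cons a l ih =>
    obtain ⟨v, u'⟩ := a
    intro u hst hs x
    obtain ⟨h1, h2, h3, h4, h5⟩ := hst
    have hs' := simpleP_tail hs
    obtain ⟨hsU, hsV⟩ := hs
    simp only [List.map_cons, List.nodup_cons, List.mem_cons, not_or] at hsU hsV
    have huX : (u, v) ∉ flipM M u' l := by
      rw [flipM_mem_notU M l u' u v hsU.1.1 hsU.1.2]; exact h2
    have hu'X : (u', v) ∈ flipM M u' l := by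
      rw [flipM_mem_notV M l u' u' v hsV.1]; exact h4
    show degA (insert (u, v) ((flipM M u' l).erase (u', v))) x
        + (if x = pend u' l then 1 else 0) = degA M x + (if x = u then 1 else 0)
    rw [degA_insert (fun hc => huX (mem_of_mem_erase hc)) x]
    have her := degA_erase hu'X x
    have hX := ih u' h5 hs' x
    simp only at her hX ⊢
    split_ifs at * <;> omega

lemma steps_append (l₁ : List (V × U)) : ∀ (l₂ : List (V × U)) (u : U),
    Steps M tgt u (l₁ ++ l₂) ↔ Steps M tgt u l₁ ∧ Steps M tgt (pend u l₁) l₂ := by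
  induction l₁ with
  | nil => intro l₂ u; exact ⟨fun h => ⟨trivial, h⟩, fun h => h.2⟩
  | cons a l ih =>
    obtain ⟨v, u'⟩ := a
    intro l₂ u
    show (tgt u v ∧ (u, v) ∉ M ∧ tgt u' v ∧ (u', v) ∈ M ∧ Steps M tgt u' (l ++ l₂)) ↔ _
    rw [ih l₂ u']
    show _ ↔ (tgt u v ∧ (u, v) ∉ M ∧ tgt u' v ∧ (u', v) ∈ M ∧ Steps M tgt u' l)
      ∧ Steps M tgt (pend u' l) l₂
    tauto

lemma pend_append (l₁ l₂ : List (V × U)) : ∀ u : U,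
    pend u (l₁ ++ l₂) = pend (pend u l₁) l₂ := by
  induction l₁ with
  | nil => intro u; rfl
  | cons a l ih =>
    obtain ⟨v, u'⟩ := a
    intro u
    show pend u' (l ++ l₂) = pend (pend u' l) l₂
    exact ih u'

lemma first_occ {l : List (V × U)} {v : V} (h : v ∈ l.map Prod.fst) :
    ∃ l₁ x l₂, l = l₁ ++ (v, x) :: l₂ ∧ v ∉ l₁.map Prod.fst := by
  induction l with
  | nil => simp at h
  | cons a l ih =>
    obtain ⟨w, x⟩ := a
    by_cases hc : v = w
    · exact ⟨[], x, l, by rw [hc]; rfl, by simp⟩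
    · simp only [List.map_cons, List.mem_cons] at h
      rcases h with h | h
      · exact absurd h hc
      · obtain ⟨l₁, x', l₂, hl, hv⟩ := ih h
        exact ⟨(w, x) :: l₁, x', l₂, by rw [hl]; rfl, by
          simp only [List.map_cons, List.mem_cons, not_or]; exact ⟨hc, hv⟩⟩

/-- Dual objective value. -/
def Dval (n : U → V → ℕ) (BU : U → ℕ) (BV : V → ℕ) (p : U → ℕ) (q : V → ℕ) : ℕ :=
  ∑ u, BU u * p u + ∑ v, BV v * q v + ∑ e ∈ univ ×ˢ univ, (n e.1 e.2 - (p e.1 + q e.2))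

/-- Saturation score of a matching. -/
def scoreS (p : U → ℕ) (q : V → ℕ) (N : Finset (U × V)) : ℕ :=
  ∑ u ∈ univ.filter (fun u => 0 < p u), degA N u
    + ∑ v ∈ univ.filter (fun v => 0 < q v), degB N v

def ReachU (u₀ u : U) : Prop :=
  ∃ l, Steps M tgt u₀ l ∧ SimpleP u₀ l ∧ pend u₀ l = u

def ReachV (u₀ : U) (v : V) : Prop :=
  ∃ l u, Steps M tgt u₀ l ∧ SimpleP u₀ l ∧ pend u₀ l = u ∧ tgt u v ∧ (u, v) ∉ M ∧
    v ∉ l.map Prod.fst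

lemma simpleP_nil (u : U) : SimpleP (V := V) u [] := by
  constructor <;> simp

lemma reachU_refl (u₀ : U) : ReachU M tgt u₀ u₀ := ⟨[], trivial, simpleP_nil u₀, rfl⟩

lemma simpleP_prefix {u : U} {l₁ l₂ : List (V × U)} (h : SimpleP u (l₁ ++ l₂)) :
    SimpleP u l₁ := by
  obtain ⟨h1, h2⟩ := h
  constructor
  · refine List.Sublist.nodup ?_ h1
    rw [List.map_append]
    exact (List.sublist_append_left _ _).cons₂ u
  · refine List.Sublist.nodup ?_ h2
    rw [List.map_append]
    exact List.sublist_append_left _ _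

lemma reachV_of {u₀ u : U} {v : V} (hr : ReachU M tgt u₀ u) (ht : tgt u v)
    (hnm : (u, v) ∉ M) : ReachV M tgt u₀ v := by
  obtain ⟨l, hst, hsp, hpd⟩ := hr
  by_cases hvl : v ∈ l.map Prod.fst
  · obtain ⟨l₁, x, l₂, rfl, hv1⟩ := first_occ hvl
    have hsa := (steps_append M tgt l₁ _ u₀).1 hst
    exact ⟨l₁, pend u₀ l₁, hsa.1, simpleP_prefix hsp, rfl, hsa.2.1, hsa.2.2.1, hv1⟩
  · exact ⟨l, u, hst, hsp, hpd, ht, hnm, hvl⟩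

lemma reachU_mem {u₀ : U} {l : List (V × U)} (hst : Steps M tgt u₀ l)
    (hsp : SimpleP u₀ l) : ∀ x ∈ u₀ :: l.map Prod.snd, ReachU M tgt u₀ x := by
  intro x hx
  rcases List.mem_cons.1 hx with rfl | hx
  · exact reachU_refl M tgt x
  · rcases List.mem_map.1 hx with ⟨⟨y, x'⟩, hmem, rfl⟩
    obtain ⟨s, t, rfl⟩ := List.append_of_mem hmem
    have hassoc : s ++ (y, x') :: t = (s ++ [(y, x')]) ++ t := by simp
    rw [hassoc] at hst hsp
    refine ⟨s ++ [(y, x')], ((steps_append M tgt _ _ u₀).1 hst).1, simpleP_prefix hsp, ?_⟩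
    rw [pend_append]
    rfl

lemma reachU_of {u₀ x : U} {v : V} (hr : ReachV M tgt u₀ v) (hxv : (x, v) ∈ M)
    (htx : tgt x v) : ReachU M tgt u₀ x := by
  obtain ⟨l, u, hst, hsp, hpd, ht, hnm, hvl⟩ := hr
  by_cases hx : x ∈ (u₀ :: l.map Prod.snd)
  · exact reachU_mem M tgt hst hsp x hx
  · refine ⟨l ++ [(v, x)], ?_, ?_, ?_⟩
    · refine (steps_append M tgt l _ u₀).2 ⟨hst, ?_⟩
      rw [hpd]
      exact ⟨ht, hnm, htx, hxv, trivial⟩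
    · obtain ⟨h1, h2⟩ := hsp
      constructor
      · simp only [List.map_append, List.map_cons, List.map_nil]
        show ((u₀ :: List.map Prod.snd l) ++ [x]).Nodup
        rw [List.nodup_append]
        refine ⟨h1, by simp, ?_⟩
        intro a ha b hb
        simp only [List.mem_singleton] at hb
        subst hb
        exact fun h => hx (h ▸ ha)
      · rw [List.map_append]
        rw [List.nodup_append]
        refine ⟨h2, by simp, ?_⟩
        intro a ha b hb
        simp only [List.map_cons, List.map_nil, List.mem_singleton] at hb
        subst hb
        exact fun h => hvl (h ▸ ha)
    · rw [pend_append]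
      rfl

lemma pend_mem : ∀ (l : List (V × U)) (u : U), l ≠ [] → pend u l ∈ l.map Prod.snd := by
  intro l
  induction l with
  | nil => intro u h; exact absurd rfl h
  | cons a l ih =>
    obtain ⟨v, u'⟩ := a
    intro u _
    show pend u' l ∈ (v, u').snd :: l.map Prod.snd
    by_cases hl : l = []
    · subst hl; simp [pend]
    · exact List.mem_cons_of_mem _ (ih u' hl)

lemma big (n : U → V → ℕ) (BU : U → ℕ) (BV : V → ℕ) (p : U → ℕ) (q : V → ℕ)
    (hmin : ∀ p' q', Dval n BU BV p q ≤ Dval n BU BV p' q')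
    (M : Finset (U × V))
    (hF : ∀ u v, p u + q v < n u v → (u, v) ∈ M)
    (hTM : ∀ e ∈ M, p e.1 + q e.2 ≤ n e.1 e.2)
    (hdA : ∀ u, degA M u ≤ BU u) (hdB : ∀ v, degB M v ≤ BV v)
    (hmax : ∀ N : Finset (U × V),
      (∀ u v, p u + q v < n u v → (u, v) ∈ N) →
      (∀ e ∈ N, p e.1 + q e.2 ≤ n e.1 e.2) →
      (∀ u, degA N u ≤ BU u) → (∀ v, degB N v ≤ BV v) →
      scoreS p q N ≤ scoreS p q M)
    (u₀ : U) (hp0 : 0 < p u₀) (hdef : degA M u₀ < BU u₀) : False := by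
  classical
  set tgt : U → V → Prop := fun u v => p u + q v = n u v with htgtdef
  -- validity of flipped matchings
  have flip_cond1 : ∀ l, Steps M tgt u₀ l →
      ∀ u v, p u + q v < n u v → (u, v) ∈ flipM M u₀ l := by
    intro l hst u v hlt
    by_contra hc
    have := flipM_mem_of_mem M tgt l u₀ hst (u, v) (hF u v hlt) hc
    rw [htgtdef] at this
    simp only at this
    omega
  have flip_cond2 : ∀ l, Steps M tgt u₀ l →
      ∀ e ∈ flipM M u₀ l, p e.1 + q e.2 ≤ n e.1 e.2 := by
    intro l hst e he
    rcases flipM_mem M tgt l u₀ hst e he with h | h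
    · exact hTM e h
    · rw [htgtdef] at h; exact le_of_eq h
  -- K2 : reachable left nodes have positive price
  have K2 : ∀ u, ReachU M tgt u₀ u → 0 < p u := by
    intro u hr
    by_contra hpu
    push_neg at hpu
    have hpu0 : p u = 0 := Nat.le_zero.1 hpu
    obtain ⟨l, hst, hsp, hpd⟩ := hr
    have hne : l ≠ [] := by
      rintro rfl
      have h' : u₀ = u := hpd
      rw [← h'] at hpu0
      omega
    have huu0 : u ≠ u₀ := by
      intro hc
      subst hc
      exact hp0.ne' hpu0
    set N := flipM M u₀ l with hNdef
    have master : ∀ x, degA N x + (if x = u then 1 else 0)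
        = degA M x + (if x = u₀ then 1 else 0) := by
      intro x
      have := flipM_degA M tgt l u₀ hst hsp x
      rw [hpd] at this
      exact this
    have hNA : ∀ x, degA N x ≤ BU x := by
      intro x
      have hm := master x
      have h2 := hdA x
      by_cases h1 : x = u₀
      · subst h1
        rw [if_neg (Ne.symm huu0), if_pos rfl] at hm
        omega
      · rw [if_neg h1] at hm
        by_cases h3 : x = u
        · rw [if_pos h3] at hm
          omega
        · rw [if_neg h3] at hm
          omega
    have hNB : ∀ y, degB N y ≤ BV y := by
      intro y
      rw [hNdef, flipM_degB M tgt l u₀ hst hsp y]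
      exact hdB y
    have hsc := hmax N (flip_cond1 l hst) (flip_cond2 l hst) hNA hNB
    have hscA : ∑ x ∈ univ.filter (fun x => 0 < p x), degA N x
        = ∑ x ∈ univ.filter (fun x => 0 < p x), (degA M x + (if x = u₀ then 1 else 0)) := by
      apply sum_congr rfl
      intro x hx
      have hxu : x ≠ u := by
        intro hc
        subst hc
        rw [mem_filter] at hx
        omega
      have := master x
      rw [if_neg hxu] at this
      omega
    rw [sum_add_distrib] at hscA
    rw [Finset.sum_ite_eq' (univ.filter (fun x => 0 < p x)) u₀ (fun _ => 1)] at hscA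
    rw [if_pos (by simp [hp0])] at hscA
    have hscB : ∑ y ∈ univ.filter (fun y => 0 < q y), degB N y
        = ∑ y ∈ univ.filter (fun y => 0 < q y), degB M y := by
      apply sum_congr rfl
      intro y _
      rw [hNdef, flipM_degB M tgt l u₀ hst hsp y]
    unfold scoreS at hsc
    omega
  -- K1 : reachable right nodes are saturated
  have K1 : ∀ v, ReachV M tgt u₀ v → degB M v = BV v := by
    intro v hr
    by_contra hvv
    have hvlt : degB M v < BV v := lt_of_le_of_ne (hdB v) hvv
    obtain ⟨l, u, hst, hsp, hpd, ht, hnm, hvl⟩ := hr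
    have hnotin : (u, v) ∉ flipM M u₀ l := by
      rw [flipM_mem_notV M l u₀ u v hvl]
      exact hnm
    set N := insert (u, v) (flipM M u₀ l) with hNdef
    have master : ∀ x, degA N x = degA M x + (if x = u₀ then 1 else 0) := by
      intro x
      have h1 := flipM_degA M tgt l u₀ hst hsp x
      rw [hpd] at h1
      have h2 : degA N x = degA (flipM M u₀ l) x + (if x = u then 1 else 0) :=
        degA_insert hnotin x
      split_ifs at * <;> omega
    have masterB : ∀ y, degB N y = degB M y + (if y = v then 1 else 0) := by
      intro y
      have h1 := flipM_degB M tgt l u₀ hst hsp y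
      have h2 : degB N y = degB (flipM M u₀ l) y + (if y = v then 1 else 0) :=
        degB_insert hnotin y
      split_ifs at * <;> omega
    have hNA : ∀ x, degA N x ≤ BU x := by
      intro x
      rw [master x]
      split_ifs with h
      · subst h; omega
      · simpa using hdA x
    have hNB : ∀ y, degB N y ≤ BV y := by
      intro y
      rw [masterB y]
      split_ifs with h
      · subst h; omega
      · simpa using hdB y
    have hc1 : ∀ u' v', p u' + q v' < n u' v' → (u', v') ∈ N := by
      intro u' v' hlt
      rw [hNdef]
      exact mem_insert_of_mem (flip_cond1 l hst u' v' hlt)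
    have hc2 : ∀ e ∈ N, p e.1 + q e.2 ≤ n e.1 e.2 := by
      intro e he
      rw [hNdef, mem_insert] at he
      rcases he with rfl | he
      · rw [htgtdef] at ht; exact le_of_eq ht
      · exact flip_cond2 l hst e he
    have hsc := hmax N hc1 hc2 hNA hNB
    have hscA : ∑ x ∈ univ.filter (fun x => 0 < p x), degA N x
        = ∑ x ∈ univ.filter (fun x => 0 < p x), (degA M x + (if x = u₀ then 1 else 0)) :=
      sum_congr rfl (fun x _ => master x)
    rw [sum_add_distrib, Finset.sum_ite_eq' (univ.filter (fun x => 0 < p x)) u₀ (fun _ => 1),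
      if_pos (by simp [hp0])] at hscA
    have hscB : ∑ y ∈ univ.filter (fun y => 0 < q y), degB N y
        ≥ ∑ y ∈ univ.filter (fun y => 0 < q y), degB M y := by
      apply sum_le_sum
      intro y _
      rw [masterB y]
      omega
    unfold scoreS at hsc
    omega
  -- reachable sets
  set RUf : Finset U := univ.filter (fun u => ReachU M tgt u₀ u) with hRUdef
  set RVf : Finset V := univ.filter (fun v => ReachV M tgt u₀ v) with hRVdef
  have hRU0 : u₀ ∈ RUf := by rw [hRUdef]; simp [reachU_refl]
  have hppos : ∀ u ∈ RUf, 1 ≤ p u := by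
    intro u hu
    rw [hRUdef, mem_filter] at hu
    exact K2 u hu.2
  have hfull : ∀ v ∈ RVf, degB M v = BV v := by
    intro v hv
    rw [hRVdef, mem_filter] at hv
    exact K1 v hv.2
  have closure2 : ∀ u ∈ RUf, ∀ v, p u + q v = n u v → (u, v) ∉ M → v ∈ RVf := by
    intro u hu v ht hnm
    rw [hRUdef, mem_filter] at hu
    rw [hRVdef, mem_filter]
    exact ⟨mem_univ v, reachV_of M tgt hu.2 ht hnm⟩
  have closure3 : ∀ v ∈ RVf, ∀ x, (x, v) ∈ M → p x + q v = n x v → x ∈ RUf := by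
    intro v hv x hm ht
    rw [hRVdef, mem_filter] at hv
    rw [hRUdef, mem_filter]
    exact ⟨mem_univ x, reachU_of M tgt hv.2 hm ht⟩
  -- adjusted duals
  set p' : U → ℕ := fun u => if u ∈ RUf then p u - 1 else p u with hp'def
  set q' : V → ℕ := fun v => if v ∈ RVf then q v + 1 else q v with hq'def
  -- block cardinalities
  set cII := ((M.filter fun e => e.2 ∈ RVf).filter fun e => e.1 ∈ RUf).card with hcIIdef
  set cOI := ((M.filter fun e => e.2 ∈ RVf).filter fun e => ¬ e.1 ∈ RUf).card with hcOIdef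
  set cII' := ((M.filter fun e => e.1 ∈ RUf).filter fun e => e.2 ∈ RVf).card with hcII'def
  set cIO := ((M.filter fun e => e.1 ∈ RUf).filter fun e => ¬ e.2 ∈ RVf).card with hcIOdef
  have hIIeq : cII = cII' := by
    rw [hcIIdef, hcII'def, filter_filter, filter_filter]
    congr 1
    apply filter_congr
    intro e _
    tauto
  have s1 : ∑ u, BU u * p u = ∑ u, BU u * p' u + ∑ u ∈ RUf, BU u := by
    have : ∀ u ∈ (univ : Finset U),
        BU u * p u = BU u * p' u + (if u ∈ RUf then BU u else 0) := by
      intro u _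
      rw [hp'def]
      simp only
      split_ifs with h
      · have h1 : 1 ≤ p u := hppos u h
        obtain ⟨k, hk⟩ : ∃ k, p u = k + 1 := ⟨p u - 1, by omega⟩
        rw [hk, Nat.add_sub_cancel, Nat.mul_add, Nat.mul_one]
      · omega
    rw [sum_congr rfl this, sum_add_distrib]
    congr 1
    rw [← sum_filter]
    congr 1
    ext x
    simp
  have s2 : ∑ v, BV v * q' v = ∑ v, BV v * q v + ∑ v ∈ RVf, BV v := by
    have : ∀ v ∈ (univ : Finset V),
        BV v * q' v = BV v * q v + (if v ∈ RVf then BV v else 0) := by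
      intro v _
      rw [hq'def]
      simp only
      split_ifs with h
      · rw [Nat.mul_add, Nat.mul_one]
      · omega
    rw [sum_congr rfl this, sum_add_distrib]
    congr 1
    rw [← sum_filter]
    congr 1
    ext x
    simp
  have s3 : (∑ e ∈ univ ×ˢ univ, (n e.1 e.2 - (p' e.1 + q' e.2))) + cOI
      ≤ (∑ e ∈ univ ×ˢ univ, (n e.1 e.2 - (p e.1 + q e.2))) + cIO := by
    have hOI : cOI = ∑ e ∈ univ ×ˢ univ,
        (if e ∈ M ∧ (¬ e.1 ∈ RUf ∧ e.2 ∈ RVf) then 1 else 0) := by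
      rw [← Finset.card_filter, hcOIdef, filter_filter]
      congr 1
      ext e
      simp only [mem_filter, Finset.mem_product, mem_univ, true_and, and_true]
      try tauto
    have hIO : cIO = ∑ e ∈ univ ×ˢ univ,
        (if e ∈ M ∧ (e.1 ∈ RUf ∧ ¬ e.2 ∈ RVf) then 1 else 0) := by
      rw [← Finset.card_filter, hcIOdef, filter_filter]
      congr 1
      ext e
      simp only [mem_filter, Finset.mem_product, mem_univ, true_and, and_true]
      try tauto
    rw [hOI, hIO, ← sum_add_distrib, ← sum_add_distrib]
    apply sum_le_sum
    rintro ⟨u, v⟩ _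
    simp only [hp'def, hq'def]
    by_cases hu : u ∈ RUf <;> by_cases hv : v ∈ RVf
    · -- in-in
      have h1 := hppos u hu
      simp only [hu, hv, not_true_eq_false, false_and, and_false, if_false, and_true,
        true_and, if_true]
      omega
    · -- in-out
      have h1 := hppos u hu
      simp only [hu, hv, not_true_eq_false, not_false_eq_true, false_and, and_false,
        if_false, and_true, true_and, if_true]
      by_cases hm : (u, v) ∈ M
      · rw [if_pos hm]
        omega
      · rw [if_neg hm]
        have hlt : n u v < p u + q v := by
          rcases lt_trichotomy (p u + q v) (n u v) with h | h | h
          · exact absurd (hF u v h) hm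
          · exact absurd (closure2 u hu v h hm) hv
          · exact h
        omega
    · -- out-in
      simp only [hu, hv, not_true_eq_false, not_false_eq_true, false_and, and_false,
        if_false, and_true, true_and, if_true]
      by_cases hm : (u, v) ∈ M
      · rw [if_pos hm]
        have hle := hTM (u, v) hm
        simp only at hle
        have hne' : p u + q v ≠ n u v := fun h => hu (closure3 v hv u hm h)
        omega
      · rw [if_neg hm]
        omega
    · -- out-out
      simp only [hu, hv, not_true_eq_false, not_false_eq_true, false_and, and_false,
        if_false, and_true, true_and, if_true]
      omega
  -- fiberwise counting
  have hsplitV : (M.filter fun e => e.2 ∈ RVf).card = cII + cOI := by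
    rw [hcIIdef, hcOIdef]
    exact (card_filter_add_card_filter_not
      (s := M.filter fun e => e.2 ∈ RVf) (fun e => e.1 ∈ RUf)).symm
  have hfibB : ∑ v ∈ RVf, degB M v = (M.filter fun e => e.2 ∈ RVf).card := by
    rw [Finset.card_eq_sum_card_fiberwise (f := fun e => e.2)
      (s := M.filter fun e => e.2 ∈ RVf) (t := RVf) (fun e he => (mem_filter.1 he).2)]
    apply sum_congr rfl
    intro v hv
    unfold degB
    rw [filter_filter]
    congr 1
    apply filter_congr
    intro e _
    exact ⟨fun h => ⟨by rw [h]; exact hv, h⟩, fun h => h.2⟩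
  have s4 : ∑ v ∈ RVf, BV v = cII + cOI := by
    rw [← hsplitV, ← hfibB]
    exact sum_congr rfl (fun v hv => (hfull v hv).symm)
  have hsplitU : (M.filter fun e => e.1 ∈ RUf).card = cII' + cIO := by
    rw [hcII'def, hcIOdef]
    exact (card_filter_add_card_filter_not
      (s := M.filter fun e => e.1 ∈ RUf) (fun e => e.2 ∈ RVf)).symm
  have hfibA : ∑ u ∈ RUf, degA M u = (M.filter fun e => e.1 ∈ RUf).card := by
    rw [Finset.card_eq_sum_card_fiberwise (f := fun e => e.1)
      (s := M.filter fun e => e.1 ∈ RUf) (t := RUf) (fun e he => (mem_filter.1 he).2)]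
    apply sum_congr rfl
    intro u hu
    unfold degA
    rw [filter_filter]
    congr 1
    apply filter_congr
    intro e _
    exact ⟨fun h => ⟨by rw [h]; exact hu, h⟩, fun h => h.2⟩
  have s5 : ∑ u ∈ RUf, degA M u + 1 ≤ ∑ u ∈ RUf, BU u := by
    have := Finset.sum_lt_sum (f := degA M) (g := BU) (s := RUf)
      (fun i _ => hdA i) ⟨u₀, hRU0, hdef⟩
    omega
  have hDle := hmin p' q'
  unfold Dval at hDle
  omega


lemma degA_swap (N : Finset (U × V)) (v : V) : degA (N.image Prod.swap) v = degB N v := by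
  unfold degA degB
  rw [Finset.filter_image, Finset.card_image_of_injective _ Prod.swap_injective]
  simp only [Prod.fst_swap]

lemma degB_swap (N : Finset (U × V)) (u : U) : degB (N.image Prod.swap) u = degA N u := by
  unfold degA degB
  rw [Finset.filter_image, Finset.card_image_of_injective _ Prod.swap_injective]
  simp only [Prod.snd_swap]

lemma swap_swap_image (N : Finset (U × V)) :
    (N.image Prod.swap).image Prod.swap = N := by
  rw [Finset.image_image]
  have : (Prod.swap ∘ (Prod.swap : U × V → V × U)) = id := funext (fun e => Prod.swap_swap e)
  rw [this, Finset.image_id]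

lemma mem_swap_iff (N : Finset (U × V)) (e : U × V) :
    e.swap ∈ N.image Prod.swap ↔ e ∈ N := by
  constructor
  · intro h
    obtain ⟨a, ha, hae⟩ := Finset.mem_image.1 h
    have : a = e := Prod.swap_injective hae
    rwa [← this]
  · exact fun h => Finset.mem_image_of_mem _ h

lemma Dval_swap (n : U → V → ℕ) (m : V → U → ℕ) (hm : ∀ v u, m v u = n u v)
    (BU : U → ℕ) (BV : V → ℕ) (p : U → ℕ) (q : V → ℕ) :
    Dval m BV BU q p = Dval n BU BV p q := by
  unfold Dval
  have hz : (∑ e ∈ (univ ×ˢ univ : Finset (V × U)), (m e.1 e.2 - (q e.1 + p e.2)))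
      = ∑ e ∈ (univ ×ˢ univ : Finset (U × V)), (n e.1 e.2 - (p e.1 + q e.2)) := by
    rw [Finset.sum_product, Finset.sum_product, Finset.sum_comm]
    refine sum_congr rfl (fun u _ => sum_congr rfl (fun v _ => ?_))
    rw [hm, Nat.add_comm]
  rw [hz]
  omega

lemma scoreS_swap (p : U → ℕ) (q : V → ℕ) (N : Finset (U × V)) :
    scoreS q p (N.image Prod.swap) = scoreS p q N := by
  unfold scoreS
  rw [add_comm]
  congr 1
  · exact sum_congr rfl (fun u _ => degB_swap N u)
  · exact sum_congr rfl (fun v _ => degA_swap N v)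

theorem exists_core (n : U → V → ℕ) (BU : U → ℕ) (BV : V → ℕ) :
    ∃ (M : Finset (U × V)) (p : U → ℕ) (q : V → ℕ),
      (∀ u, degA M u ≤ BU u) ∧
      (∀ v, degB M v ≤ BV v) ∧
      (∀ u v, (u, v) ∉ M → n u v ≤ p u + q v) ∧
      (∀ u v, (u, v) ∈ M → p u + q v ≤ n u v) ∧
      (∀ u, 0 < p u → degA M u = BU u) ∧
      (∀ v, 0 < q v → degB M v = BV v) := by
  classical
  have hne : (Set.range fun pq : (U → ℕ) × (V → ℕ) => Dval n BU BV pq.1 pq.2).Nonempty :=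
    ⟨Dval n BU BV (fun _ => 0) (fun _ => 0), ⟨(fun _ => 0, fun _ => 0), rfl⟩⟩
  obtain ⟨⟨p, q⟩, hpq⟩ := Nat.sInf_mem hne
  have hpq' : Dval n BU BV p q
      = sInf (Set.range fun pq : (U → ℕ) × (V → ℕ) => Dval n BU BV pq.1 pq.2) := hpq
  have hmin : ∀ p' q', Dval n BU BV p q ≤ Dval n BU BV p' q' := by
    intro p' q'
    rw [hpq']
    exact Nat.sInf_le ⟨(p', q'), rfl⟩
  set F : Finset (U × V) := (univ ×ˢ univ).filter (fun e => p e.1 + q e.2 < n e.1 e.2)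
    with hFdef
  have memF : ∀ e : U × V, e ∈ F ↔ p e.1 + q e.2 < n e.1 e.2 := by
    intro e
    rw [hFdef, mem_filter]
    simp [Finset.mem_product]
  have rowU : ∀ u₀, degA F u₀ ≤ BU u₀ := by
    intro u₀
    set p1 : U → ℕ := fun x => if x = u₀ then p x + 1 else p x with hp1def
    have hD := hmin p1 q
    unfold Dval at hD
    have e1 : ∑ u, BU u * p1 u = ∑ u, BU u * p u + BU u₀ := by
      have h : ∀ u ∈ (univ : Finset U),
          BU u * p1 u = BU u * p u + (if u = u₀ then BU u else 0) := by
        intro u _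
        rw [hp1def]
        simp only
        split_ifs with hh
        · rw [Nat.mul_add, Nat.mul_one]
        · omega
      rw [sum_congr rfl h, sum_add_distrib, Finset.sum_ite_eq' univ u₀ BU,
        if_pos (mem_univ u₀)]
    have hcard : degA F u₀ = ∑ e ∈ univ ×ˢ univ,
        (if (p e.1 + q e.2 < n e.1 e.2) ∧ e.1 = u₀ then 1 else 0) := by
      unfold degA
      rw [hFdef, filter_filter, Finset.card_filter]
    have e3 : ∑ e ∈ univ ×ˢ univ, (n e.1 e.2 - (p e.1 + q e.2))
        = ∑ e ∈ univ ×ˢ univ, (n e.1 e.2 - (p1 e.1 + q e.2)) + degA F u₀ := by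
      rw [hcard, ← sum_add_distrib]
      apply sum_congr rfl
      rintro ⟨u, v⟩ _
      simp only [hp1def]
      by_cases h : u = u₀
      · rw [if_pos h]
        by_cases hs : p u + q v < n u v
        · rw [if_pos ⟨hs, h⟩]
          omega
        · rw [if_neg (fun hc : _ ∧ _ => hs hc.1)]
          omega
      · rw [if_neg h, if_neg (fun hc : _ ∧ _ => h hc.2)]
        omega
    omega
  have colV : ∀ v₀, degB F v₀ ≤ BV v₀ := by
    intro v₀
    set q1 : V → ℕ := fun y => if y = v₀ then q y + 1 else q y with hq1def
    have hD := hmin p q1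
    unfold Dval at hD
    have e1 : ∑ v, BV v * q1 v = ∑ v, BV v * q v + BV v₀ := by
      have h : ∀ v ∈ (univ : Finset V),
          BV v * q1 v = BV v * q v + (if v = v₀ then BV v else 0) := by
        intro v _
        rw [hq1def]
        simp only
        split_ifs with hh
        · rw [Nat.mul_add, Nat.mul_one]
        · omega
      rw [sum_congr rfl h, sum_add_distrib, Finset.sum_ite_eq' univ v₀ BV,
        if_pos (mem_univ v₀)]
    have hcard : degB F v₀ = ∑ e ∈ univ ×ˢ univ,
        (if (p e.1 + q e.2 < n e.1 e.2) ∧ e.2 = v₀ then 1 else 0) := by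
      unfold degB
      rw [hFdef, filter_filter, Finset.card_filter]
    have e3 : ∑ e ∈ univ ×ˢ univ, (n e.1 e.2 - (p e.1 + q e.2))
        = ∑ e ∈ univ ×ˢ univ, (n e.1 e.2 - (p e.1 + q1 e.2)) + degB F v₀ := by
      rw [hcard, ← sum_add_distrib]
      apply sum_congr rfl
      rintro ⟨u, v⟩ _
      simp only [hq1def]
      by_cases h : v = v₀
      · rw [if_pos h]
        by_cases hs : p u + q v < n u v
        · rw [if_pos ⟨hs, h⟩]
          omega
        · rw [if_neg (fun hc : _ ∧ _ => hs hc.1)]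
          omega
      · rw [if_neg h, if_neg (fun hc : _ ∧ _ => h hc.2)]
        omega
    omega
  -- maximal-score valid matching
  set Valid : Finset (U × V) → Prop := fun N =>
    (∀ u v, p u + q v < n u v → (u, v) ∈ N) ∧ (∀ e ∈ N, p e.1 + q e.2 ≤ n e.1 e.2) ∧
    (∀ u, degA N u ≤ BU u) ∧ (∀ v, degB N v ≤ BV v) with hValiddef
  have hFvalid : Valid F := by
    rw [hValiddef]
    exact ⟨fun u v h => (memF (u, v)).2 h, fun e he => le_of_lt ((memF e).1 he), rowU, colV⟩
  obtain ⟨M, hMmem, hMmax⟩ := Finset.exists_max_image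
    (((univ ×ˢ univ : Finset (U × V)).powerset).filter Valid) (scoreS p q)
    ⟨F, by
      rw [mem_filter, mem_powerset]
      exact ⟨fun e he => mem_product.2 ⟨mem_univ _, mem_univ _⟩, hFvalid⟩⟩
  have hMvalid : Valid M := (mem_filter.1 hMmem).2
  rw [hValiddef] at hMvalid
  obtain ⟨hMF, hMT, hMA, hMB⟩ := hMvalid
  have hmaxM : ∀ N : Finset (U × V),
      (∀ u v, p u + q v < n u v → (u, v) ∈ N) →
      (∀ e ∈ N, p e.1 + q e.2 ≤ n e.1 e.2) →
      (∀ u, degA N u ≤ BU u) → (∀ v, degB N v ≤ BV v) →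
      scoreS p q N ≤ scoreS p q M := by
    intro N h1 h2 h3 h4
    apply hMmax
    rw [mem_filter, mem_powerset]
    refine ⟨fun e he => mem_product.2 ⟨mem_univ _, mem_univ _⟩, ?_⟩
    rw [hValiddef]
    exact ⟨h1, h2, h3, h4⟩
  have hC4A : ∀ u, 0 < p u → degA M u = BU u := by
    intro u hp
    by_contra hnesat
    exact big n BU BV p q hmin M hMF hMT hMA hMB hmaxM u hp
      (lt_of_le_of_ne (hMA u) hnesat)
  -- transpose for the other side
  have hC4B : ∀ v, 0 < q v → degB M v = BV v := by
    intro v hq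
    by_contra hnesat
    set m : V → U → ℕ := fun v u => n u v with hmdef
    have hmm : ∀ v u, m v u = n u v := fun _ _ => rfl
    have hmin' : ∀ q' p', Dval m BV BU q p ≤ Dval m BV BU q' p' := by
      intro q' p'
      rw [Dval_swap n m hmm BU BV p q, Dval_swap n m hmm BU BV p' q']
      exact hmin p' q'
    set M' : Finset (V × U) := M.image Prod.swap with hM'def
    have hmemM' : ∀ u v, ((v, u) ∈ M' ↔ (u, v) ∈ M) := by
      intro u v
      rw [hM'def]
      exact mem_swap_iff M (u, v)
    have hF' : ∀ v u, q v + p u < m v u → (v, u) ∈ M' := by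
      intro v u hlt
      rw [hmemM']
      exact hMF u v (by rw [← hmm]; omega)
    have hT' : ∀ e ∈ M', q e.1 + p e.2 ≤ m e.1 e.2 := by
      intro e he
      rw [hM'def, Finset.mem_image] at he
      obtain ⟨a, ha, rfl⟩ := he
      have := hMT a ha
      rw [hmm]
      simp only [Prod.fst_swap, Prod.snd_swap]
      omega
    have hA' : ∀ v, degA M' v ≤ BV v := by
      intro v
      rw [hM'def, degA_swap]
      exact hMB v
    have hB' : ∀ u, degB M' u ≤ BU u := by
      intro u
      rw [hM'def, degB_swap]
      exact hMA u
    have hmax' : ∀ N' : Finset (V × U),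
        (∀ v u, q v + p u < m v u → (v, u) ∈ N') →
        (∀ e ∈ N', q e.1 + p e.2 ≤ m e.1 e.2) →
        (∀ v, degA N' v ≤ BV v) → (∀ u, degB N' u ≤ BU u) →
        scoreS q p N' ≤ scoreS q p M' := by
      intro N' h1 h2 h3 h4
      have hNN : N' = (N'.image Prod.swap).image Prod.swap := (swap_swap_image _).symm
      rw [hNN, scoreS_swap (p := p) (q := q) (N := N'.image Prod.swap), hM'def,
        scoreS_swap (p := p) (q := q) (N := M)]
      apply hmaxM
      · intro u' v' hlt
        have := h1 v' u' (by rw [hmm]; omega)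
        exact (mem_swap_iff (U := V) (V := U) N' (v', u')).2 this
      · intro e he
        rw [Finset.mem_image] at he
        obtain ⟨a, ha, rfl⟩ := he
        have := h2 a ha
        rw [hmm] at this
        simp only [Prod.fst_swap, Prod.snd_swap]
        omega
      · intro u'
        rw [degA_swap (U := V) (V := U) N' u']
        exact h4 u'
      · intro v'
        rw [degB_swap (U := V) (V := U) N' v']
        exact h3 v'
    exact big m BV BU q p hmin' M' hF' hT' hA' hB' hmax' v hq
      (by rw [hM'def, degA_swap]; exact lt_of_le_of_ne (hMB v) hnesat)
  refine ⟨M, p, q, hMA, hMB, ?_, ?_, hC4A, hC4B⟩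
  · intro u v hnm
    by_contra hlt
    push_neg at hlt
    exact hnm (hMF u v hlt)
  · intro u v hm
    exact hMT (u, v) hm

end CoreComb


open Finset

section Rank

set_option linter.unusedSectionVars false

variable {α : Type*} [DecidableEq α] (ι : α → ℕ)

/-- 1-based rank of `x` within finset `s`, ordering by the injection `ι`. -/
def rankIn (s : Finset α) (x : α) : ℕ := 1 + (s.filter fun y => ι y < ι x).card

lemma rankIn_pos (s : Finset α) (x : α) : 1 ≤ rankIn ι s x := Nat.le_add_right 1 _

lemma rankIn_le {s : Finset α} {x : α} (hx : x ∈ s) : rankIn ι s x ≤ s.card := by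
  have h : (s.filter fun y => ι y < ι x) ⊆ s.erase x := by
    intro y hy
    simp only [mem_filter] at hy
    exact mem_erase.2 ⟨fun h => absurd (h ▸ hy.2) (lt_irrefl _), hy.1⟩
  have := card_le_card h
  rw [card_erase_of_mem hx] at this
  have hc : 1 ≤ s.card := card_pos.2 ⟨x, hx⟩
  unfold rankIn
  omega

lemma rankIn_lt_of_lt {s : Finset α} {x y : α} (hx : x ∈ s) (hxy : ι x < ι y) :
    rankIn ι s x < rankIn ι s y := by
  have hsub : (s.filter fun z => ι z < ι x) ⊂ s.filter fun z => ι z < ι y := by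
    constructor
    · intro z hz
      simp only [mem_filter] at hz ⊢
      exact ⟨hz.1, lt_trans hz.2 hxy⟩
    · intro hcon
      have hxmem : x ∈ s.filter fun z => ι z < ι y := mem_filter.2 ⟨hx, hxy⟩
      have := hcon hxmem
      simp only [mem_filter] at this
      exact absurd this.2 (lt_irrefl _)
  have := card_lt_card hsub
  unfold rankIn
  omega

lemma rankIn_injOn (hι : Function.Injective ι) {s : Finset α} {x y : α} (hx : x ∈ s) (hy : y ∈ s)
    (h : rankIn ι s x = rankIn ι s y) : x = y := by
  rcases lt_trichotomy (ι x) (ι y) with hl | he | hg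
  · exact absurd h (Nat.ne_of_lt (rankIn_lt_of_lt ι hx hl))
  · exact hι he
  · exact absurd h.symm (Nat.ne_of_lt (rankIn_lt_of_lt ι hy hg))

lemma rankIn_surj (hι : Function.Injective ι) {s : Finset α} {i : ℕ} (h1 : 1 ≤ i) (h2 : i ≤ s.card) :
    ∃ x ∈ s, rankIn ι s x = i := by
  have himg : s.image (rankIn ι s) = Finset.Icc 1 s.card := by
    apply Finset.eq_of_subset_of_card_le
    · intro j hj
      simp only [mem_image] at hj
      obtain ⟨x, hx, rfl⟩ := hj
      exact Finset.mem_Icc.2 ⟨rankIn_pos ι s x, rankIn_le ι hx⟩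
    · rw [Nat.card_Icc]
      have : (s.image (rankIn ι s)).card = s.card :=
        Finset.card_image_of_injOn (fun x hx y hy h => rankIn_injOn ι hι hx hy h)
      omega
  have : i ∈ s.image (rankIn ι s) := by
    rw [himg]; exact Finset.mem_Icc.2 ⟨h1, h2⟩
  simpa only [mem_image] using this

end Rank

variable {U V : Type*} [Fintype U] [Fintype V] [Nonempty U] [Nonempty V]
  [DecidableEq U] [DecidableEq V]

/-- If every weight is an integer multiple of `ε > 0`, then there is
a copies-core solution in which every aspiration is a nonnegative integer multiple
of `ε`. -/
theorem exists_copiesCore_on_grid (W : U → V → ℚ) (hW : ∀ u v, 0 ≤ W u v)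
    (BU : U → ℤ) (BV : V → ℤ) (hBU : ∀ u, 1 ≤ BU u) (hBV : ∀ v, 1 ≤ BV v)
    (ε : ℚ) (hε : 0 < ε) (hWmul : ∀ u v, ∃ n : ℤ, W u v = n * ε) :
    ∃ (aU : U → ℤ → ℚ) (aV : V → ℤ → ℚ) (𝓜 : Finset ((U × ℤ) × (V × ℤ))),
      IsCopiesCore W BU BV aU aV 𝓜 ∧
      (∀ u i, 1 ≤ i → i ≤ BU u → ∃ n : ℕ, aU u i = (n : ℚ) * ε) ∧
      (∀ v j, 1 ≤ j → j ≤ BV v → ∃ n : ℕ, aV v j = (n : ℚ) * ε) := by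
  classical
  -- integer weights
  have hm0 : ∀ u v, (0:ℤ) ≤ Classical.choose (hWmul u v) := by
    intro u v
    have hch := Classical.choose_spec (hWmul u v)
    by_contra hlt
    push_neg at hlt
    have hlt' : ((Classical.choose (hWmul u v) : ℤ) : ℚ) < 0 := by exact_mod_cast hlt
    have := mul_neg_of_neg_of_pos hlt' hε
    rw [← hch] at this
    exact absurd (hW u v) (not_le.2 this)
  set nN : U → V → ℕ := fun u v => (Classical.choose (hWmul u v)).toNat with hnNdef
  have hnN : ∀ u v, W u v = (nN u v : ℚ) * ε := by
    intro u v
    have hch := Classical.choose_spec (hWmul u v)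
    have hcast : ((nN u v : ℤ) : ℚ) = ((Classical.choose (hWmul u v) : ℤ) : ℚ) := by
      rw [hnNdef]; exact_mod_cast congrArg Int.cast (Int.toNat_of_nonneg (hm0 u v))
    rw [hch]
    push_cast at hcast ⊢
    rw [hcast]
  have hBUcast : ∀ u, (((BU u).toNat : ℤ)) = BU u :=
    fun u => Int.toNat_of_nonneg (by linarith [hBU u])
  have hBVcast : ∀ v, (((BV v).toNat : ℤ)) = BV v :=
    fun v => Int.toNat_of_nonneg (by linarith [hBV v])
  obtain ⟨M, p, q, hMA, hMB, hC2, hC3, hC4A, hC4B⟩ :=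
    exists_core nN (fun u => (BU u).toNat) (fun v => (BV v).toNat)
  -- injections into ℕ
  set ιU : U → ℕ := fun u => ((Fintype.equivFin U) u : ℕ) with hιUdef
  set ιV : V → ℕ := fun v => ((Fintype.equivFin V) v : ℕ) with hιVdef
  have hιU : Function.Injective ιU := fun a b h =>
    (Fintype.equivFin U).injective (Fin.val_injective h)
  have hιV : Function.Injective ιV := fun a b h =>
    (Fintype.equivFin V).injective (Fin.val_injective h)
  -- partner sets
  set PU : U → Finset V := fun u => (M.filter fun e => e.1 = u).image Prod.snd with hPUdef
  set PV : V → Finset U := fun v => (M.filter fun e => e.2 = v).image Prod.fst with hPVdef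
  have mem_PU : ∀ u v, v ∈ PU u ↔ (u, v) ∈ M := by
    intro u v
    rw [hPUdef]
    simp only [mem_image, mem_filter]
    constructor
    · rintro ⟨⟨a, b⟩, ⟨hm, h1⟩, h2⟩
      simp only at h1 h2
      rw [← h1, ← h2]; exact hm
    · intro h; exact ⟨(u, v), ⟨h, rfl⟩, rfl⟩
  have mem_PV : ∀ v u, u ∈ PV v ↔ (u, v) ∈ M := by
    intro v u
    rw [hPVdef]
    simp only [mem_image, mem_filter]
    constructor
    · rintro ⟨⟨a, b⟩, ⟨hm, h1⟩, h2⟩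
      simp only at h1 h2
      rw [← h1, ← h2]; exact hm
    · intro h; exact ⟨(u, v), ⟨h, rfl⟩, rfl⟩
  have cardPU : ∀ u, (PU u).card = degA M u := by
    intro u
    rw [hPUdef]
    apply card_image_of_injOn
    rintro ⟨a, b⟩ ha ⟨c, d⟩ hc h
    simp only [coe_filter, Set.mem_setOf_eq] at ha hc
    simp only at h
    rw [Prod.mk.injEq]
    exact ⟨ha.2.trans hc.2.symm, h⟩
  have cardPV : ∀ v, (PV v).card = degB M v := by
    intro v
    rw [hPVdef]
    apply card_image_of_injOn
    rintro ⟨a, b⟩ ha ⟨c, d⟩ hc h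
    simp only [coe_filter, Set.mem_setOf_eq] at ha hc
    simp only at h
    rw [Prod.mk.injEq]
    exact ⟨h, ha.2.trans hc.2.symm⟩
  -- ranks
  set rU : U → V → ℕ := fun u v => rankIn ιV (PU u) v with hrUdef
  set rV : V → U → ℕ := fun v u => rankIn ιU (PV v) u with hrVdef
  -- the copies matching
  set 𝓜 : Finset ((U × ℤ) × (V × ℤ)) :=
    M.image (fun e => ((e.1, (rU e.1 e.2 : ℤ)), (e.2, (rV e.2 e.1 : ℤ)))) with h𝓜def
  -- partner of a copy
  set pt : U → ℤ → V := fun u i =>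
    if h : ∃ v, v ∈ PU u ∧ (rU u v : ℤ) = i then h.choose else Classical.arbitrary V
    with hptdef
  have pt_spec : ∀ u i (h : ∃ v, v ∈ PU u ∧ (rU u v : ℤ) = i),
      pt u i ∈ PU u ∧ (rU u (pt u i) : ℤ) = i := by
    intro u i h
    rw [hptdef]
    simp only [dif_pos h]
    exact h.choose_spec
  have pt_eq : ∀ u v, v ∈ PU u → pt u ((rU u v : ℤ)) = v := by
    intro u v hv
    have h : ∃ v', v' ∈ PU u ∧ (rU u v' : ℤ) = (rU u v : ℤ) := ⟨v, hv, rfl⟩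
    obtain ⟨h1, h2⟩ := pt_spec u _ h
    have : rU u (pt u (rU u v : ℤ)) = rU u v := by exact_mod_cast h2
    rw [hrUdef] at this
    exact rankIn_injOn ιV hιV h1 hv this
  -- allocations
  set aU : U → ℤ → ℚ := fun u i =>
    if ∃ v, v ∈ PU u ∧ (rU u v : ℤ) = i
    then ((nN u (pt u i) - q (pt u i) : ℕ) : ℚ) * ε else 0 with haUdef
  set aV : V → ℤ → ℚ := fun v j =>
    if 1 ≤ j ∧ j ≤ (degB M v : ℤ) then ((q v : ℕ) : ℚ) * ε else 0 with haVdef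
  have aU_grid : ∀ u i, ∃ m : ℕ, aU u i = (m : ℚ) * ε := by
    intro u i
    rw [haUdef]
    simp only
    split_ifs
    · exact ⟨_, rfl⟩
    · exact ⟨0, by norm_num⟩
  have aV_grid : ∀ v j, ∃ m : ℕ, aV v j = (m : ℚ) * ε := by
    intro v j
    rw [haVdef]
    simp only
    split_ifs
    · exact ⟨_, rfl⟩
    · exact ⟨0, by norm_num⟩
  have aU_nonneg : ∀ u i, 0 ≤ aU u i := by
    intro u i
    obtain ⟨m, hm⟩ := aU_grid u i
    rw [hm]
    positivity
  have aV_nonneg : ∀ v j, 0 ≤ aV v j := by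
    intro v j
    obtain ⟨m, hm⟩ := aV_grid v j
    rw [hm]
    positivity
  have aU_matched : ∀ u v, v ∈ PU u → aU u ((rU u v : ℤ)) = ((nN u v - q v : ℕ) : ℚ) * ε := by
    intro u v hv
    rw [haUdef]
    simp only
    rw [if_pos ⟨v, hv, rfl⟩, pt_eq u v hv]
  -- ranks bounds
  have rU_bound : ∀ u v, v ∈ PU u → rU u v ≤ degA M u := by
    intro u v hv
    rw [hrUdef]
    calc rankIn ιV (PU u) v ≤ (PU u).card := rankIn_le ιV hv
    _ = degA M u := cardPU u
  have rV_bound : ∀ v u, u ∈ PV v → rV v u ≤ degB M v := by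
    intro v u hu
    rw [hrVdef]
    calc rankIn ιU (PV v) u ≤ (PV v).card := rankIn_le ιU hu
    _ = degB M v := cardPV v
  -- reduced matching
  have hred : reduceMatching 𝓜 = M := by
    rw [h𝓜def]
    unfold reduceMatching
    rw [Finset.image_image]
    have : ((fun e : (U × ℤ) × (V × ℤ) => (e.1.1, e.2.1)) ∘
        (fun e : U × V => ((e.1, (rU e.1 e.2 : ℤ)), (e.2, (rV e.2 e.1 : ℤ))))) = id := by
      funext e
      simp
    rw [this, Finset.image_id]
  refine ⟨aU, aV, 𝓜, ⟨?_, ⟨?_, ?_⟩, ?_, ?_, ?_, ?_⟩, ?_, ?_⟩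
  · -- IsBCopiesMatching
    refine ⟨?_, ?_, ?_, ?_⟩
    · intro e he
      rw [h𝓜def] at he
      simp only [mem_image] at he
      obtain ⟨⟨u, v⟩, hm, rfl⟩ := he
      have h1 : v ∈ PU u := (mem_PU u v).2 hm
      have h2 : u ∈ PV v := (mem_PV v u).2 hm
      dsimp only
      refine ⟨?_, ?_, ?_, ?_⟩
      · exact_mod_cast rankIn_pos ιV (PU u) v
      · calc ((rU u v : ℤ)) ≤ (degA M u : ℤ) := by exact_mod_cast rU_bound u v h1
        _ ≤ (((BU u).toNat : ℕ) : ℤ) := by exact_mod_cast hMA u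
        _ = BU u := hBUcast u
      · exact_mod_cast rankIn_pos ιU (PV v) u
      · calc ((rV v u : ℤ)) ≤ (degB M v : ℤ) := by exact_mod_cast rV_bound v u h2
        _ ≤ (((BV v).toNat : ℕ) : ℤ) := by exact_mod_cast hMB v
        _ = BV v := hBVcast v
    · intro e he f hf hef
      rw [h𝓜def] at he hf
      simp only [mem_image] at he hf
      obtain ⟨⟨u1, v1⟩, hm1, rfl⟩ := he
      obtain ⟨⟨u2, v2⟩, hm2, rfl⟩ := hf
      simp only [Prod.mk.injEq] at hef
      obtain ⟨rfl, hr⟩ := hef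
      have hr' : rU u1 v1 = rU u1 v2 := by exact_mod_cast hr
      have : v1 = v2 := by
        rw [hrUdef] at hr'
        exact rankIn_injOn ιV hιV ((mem_PU u1 v1).2 hm1) ((mem_PU u1 v2).2 hm2) hr'
      subst this
      rfl
    · intro e he f hf hef
      rw [h𝓜def] at he hf
      simp only [mem_image] at he hf
      obtain ⟨⟨u1, v1⟩, hm1, rfl⟩ := he
      obtain ⟨⟨u2, v2⟩, hm2, rfl⟩ := hf
      simp only [Prod.mk.injEq] at hef
      obtain ⟨rfl, hr⟩ := hef
      have hr' : rV v1 u1 = rV v1 u2 := by exact_mod_cast hr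
      have : u1 = u2 := by
        rw [hrVdef] at hr'
        exact rankIn_injOn ιU hιU ((mem_PV v1 u1).2 hm1) ((mem_PV v1 u2).2 hm2) hr'
      subst this
      rfl
    · intro e he f hf h1 h2
      rw [h𝓜def] at he hf
      simp only [mem_image] at he hf
      obtain ⟨⟨u1, v1⟩, hm1, rfl⟩ := he
      obtain ⟨⟨u2, v2⟩, hm2, rfl⟩ := hf
      simp only at h1 h2
      subst h1; subst h2
      rfl
  · -- AllocNonneg U
    intro u i _ _; exact aU_nonneg u i
  · intro v j _ _; exact aV_nonneg v j
  · -- EdgeSaturation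
    intro e he
    rw [h𝓜def] at he
    simp only [mem_image] at he
    obtain ⟨⟨u, v⟩, hm, rfl⟩ := he
    simp only
    have h1 : v ∈ PU u := (mem_PU u v).2 hm
    have h2 : u ∈ PV v := (mem_PV v u).2 hm
    rw [aU_matched u v h1]
    have haVv : aV v ((rV v u : ℤ)) = ((q v : ℕ) : ℚ) * ε := by
      rw [haVdef]
      simp only
      rw [if_pos]
      constructor
      · exact_mod_cast rankIn_pos ιU (PV v) u
      · exact_mod_cast rV_bound v u h2
    rw [haVv, hnN u v]
    have hq : q v ≤ nN u v := le_trans (Nat.le_add_left _ _) (hC3 u v hm)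
    rw [Nat.cast_sub hq]
    ring
  · -- PairwiseStability
    intro u v huv i j hi1 hi2 hj1 hj2
    rw [hred] at huv
    have hu : (p u : ℚ) * ε ≤ aU u i := by
      by_cases h : ∃ v', v' ∈ PU u ∧ (rU u v' : ℤ) = i
      · obtain ⟨hv', hr'⟩ := pt_spec u i h
        rw [← hr', aU_matched u _ hv']
        have hc3 := hC3 u (pt u i) ((mem_PU u (pt u i)).1 hv')
        have h1 : p u ≤ nN u (pt u i) - q (pt u i) := by omega
        have h2 : (p u : ℚ) ≤ ((nN u (pt u i) - q (pt u i) : ℕ) : ℚ) := by exact_mod_cast h1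
        exact mul_le_mul_of_nonneg_right h2 (le_of_lt hε)
      · have hp0 : p u = 0 := by
          by_contra hp
          have hsat := hC4A u (Nat.pos_of_ne_zero hp)
          have hi1n : 1 ≤ i.toNat := by omega
          have hi2n : i.toNat ≤ (PU u).card := by
            rw [cardPU u, hsat]
            rw [← hBUcast u] at hi2
            omega
          obtain ⟨v', hv', hr'⟩ := rankIn_surj ιV hιV hi1n hi2n
          refine h ⟨v', hv', ?_⟩
          rw [hrUdef]
          simp only [hr']
          omega
        rw [hp0]
        simpa using aU_nonneg u i
    have hv : (q v : ℚ) * ε ≤ aV v j := by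
      by_cases hc : 1 ≤ j ∧ j ≤ (degB M v : ℤ)
      · rw [haVdef]
        simp only
        rw [if_pos hc]
      · have hq0 : q v = 0 := by
          by_contra hq
          have hsat := hC4B v (Nat.pos_of_ne_zero hq)
          rw [← hBVcast v] at hj2
          push_neg at hc
          have := hc hj1
          omega
        rw [hq0]
        simpa using aV_nonneg v j
    have hc2 := hC2 u v huv
    have hc2' : (nN u v : ℚ) ≤ (p u : ℚ) + (q v : ℚ) := by exact_mod_cast hc2
    rw [hnN u v]
    calc (nN u v : ℚ) * ε ≤ ((p u : ℚ) + (q v : ℚ)) * ε :=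
          mul_le_mul_of_nonneg_right hc2' (le_of_lt hε)
    _ = (p u : ℚ) * ε + (q v : ℚ) * ε := by ring
    _ ≤ aU u i + aV v j := add_le_add hu hv
  · -- ZeroGain U
    intro u i hi1 hi2 hno
    rw [haUdef]
    simp only
    rw [if_neg]
    intro h
    obtain ⟨v', hv', hr'⟩ := h
    have hm : (u, v') ∈ M := (mem_PU u v').1 hv'
    have he : ((u, (rU u v' : ℤ)), (v', (rV v' u : ℤ))) ∈ 𝓜 := by
      rw [h𝓜def]
      exact mem_image_of_mem _ hm
    have := hno _ he
    simp only [hr'] at this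
    exact this rfl
  · -- ZeroGain V
    intro v j hj1 hj2 hno
    rw [haVdef]
    simp only
    rw [if_neg]
    intro hc
    obtain ⟨hc1, hc2⟩ := hc
    have hj1n : 1 ≤ j.toNat := by omega
    have hj2n : j.toNat ≤ (PV v).card := by rw [cardPV v]; omega
    obtain ⟨u', hu', hr'⟩ := rankIn_surj ιU hιU hj1n hj2n
    have hm : (u', v) ∈ M := (mem_PV v u').1 hu'
    have he : ((u', (rU u' v : ℤ)), (v, (rV v u' : ℤ))) ∈ 𝓜 := by
      rw [h𝓜def]
      exact mem_image_of_mem _ hm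
    have := hno _ he
    have hrj : (rV v u' : ℤ) = j := by
      rw [hrVdef]
      simp only [hr']
      omega
    simp only [hrj] at this
    exact this rfl
  · -- grid U
    intro u i _ _; exact aU_grid u i
  · intro v j _ _; exact aV_grid v j
end

section
/- Let (a, 𝓜) be a feasible state, let p ∈ U and r ∈ V be such that no copy of p is matched in 𝓜 to a copy of r, and let copies p_i and r_j satisfy a_{p,i} + a_{r,j} < W(p,r). Define 𝓜' from 𝓜 by deleting the edge of 𝓜 incident to p_i (if any), deleting the edge of 𝓜 incident to r_j (if any), and adding (p_i, r_j); define a' from a by setting a'_{p,i} = W(p,r) − a_{r,j} and leaving all other aspirations unchanged. Then (a', 𝓜') is a feasible state. -/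
open Finset

variable {U V : Type*} [Fintype U] [Fintype V] [Nonempty U] [Nonempty V]
  [DecidableEq U] [DecidableEq V]

/-- A successful proposal preserves feasibility: starting from a
feasible state, matching the copies `p_i` and `r_j` (for an unmatched node pair with
`a_(p,i) + a_(r,j) < W p r`), breaking the old matches of these two copies, and
raising `p_i`'s aspiration to `W p r - a_(r,j)` yields a feasible state. -/
theorem proposal_preserves_feasibility (W : U → V → ℚ) (hW : ∀ u v, 0 ≤ W u v)
    (BU : U → ℤ) (BV : V → ℤ) (hBU : ∀ u, 1 ≤ BU u) (hBV : ∀ v, 1 ≤ BV v)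
    (aU : U → ℤ → ℚ) (aV : V → ℤ → ℚ) (𝓜 : Finset ((U × ℤ) × (V × ℤ)))
    (h𝓜 : IsBCopiesMatching BU BV 𝓜)
    (hnn : AllocNonneg BU BV aU aV)
    (hsat : EdgeSaturation W aU aV 𝓜)
    (p : U) (r : V) (hpr : (p, r) ∉ reduceMatching 𝓜)
    (i j : ℤ) (hi1 : 1 ≤ i) (hi2 : i ≤ BU p) (hj1 : 1 ≤ j) (hj2 : j ≤ BV r)
    (hlt : aU p i + aV r j < W p r) :
    IsBCopiesMatching BU BV
      (insert ((p, i), (r, j)) (𝓜.filter fun e => e.1 ≠ (p, i) ∧ e.2 ≠ (r, j))) ∧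
    AllocNonneg BU BV (fun u k => if u = p ∧ k = i then W p r - aV r j else aU u k) aV ∧
    EdgeSaturation W (fun u k => if u = p ∧ k = i then W p r - aV r j else aU u k) aV
      (insert ((p, i), (r, j)) (𝓜.filter fun e => e.1 ≠ (p, i) ∧ e.2 ≠ (r, j))) := by
  obtain ⟨hcop, huniq1, huniq2, hnode⟩ := h𝓜
  obtain ⟨hnnU, hnnV⟩ := hnn
  set 𝓝 := insert ((p, i), (r, j)) (𝓜.filter fun e => e.1 ≠ (p, i) ∧ e.2 ≠ (r, j))
    with h𝓝
  have hmem : ∀ e ∈ 𝓝, e = ((p, i), (r, j)) ∨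
      (e ∈ 𝓜 ∧ e.1 ≠ (p, i) ∧ e.2 ≠ (r, j)) := by
    intro e he
    rcases Finset.mem_insert.mp he with h | h
    · exact Or.inl h
    · rcases Finset.mem_filter.mp h with ⟨h1, h2⟩; exact Or.inr ⟨h1, h2⟩
  have hnotpr : ∀ f ∈ 𝓜, ¬(f.1.1 = p ∧ f.2.1 = r) := by
    intro f hf ⟨h1, h2⟩
    exact hpr (Finset.mem_image.mpr ⟨f, hf, by simp [h1, h2]⟩)
  refine ⟨⟨?_, ?_, ?_, ?_⟩, ⟨?_, hnnV⟩, ?_⟩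
  · intro e he
    rcases hmem e he with h | ⟨h, _⟩
    · subst h; exact ⟨hi1, hi2, hj1, hj2⟩
    · exact hcop e h
  · intro e he f hf hef
    rcases hmem e he with h | ⟨h, h1, _⟩ <;> rcases hmem f hf with h' | ⟨h', h1', _⟩
    · rw [h, h']
    · subst h; exact absurd hef.symm h1'
    · subst h'; exact absurd hef h1
    · exact huniq1 e h f h' hef
  · intro e he f hf hef
    rcases hmem e he with h | ⟨h, _, h2⟩ <;> rcases hmem f hf with h' | ⟨h', _, h2'⟩
    · rw [h, h']
    · subst h; exact absurd hef.symm h2'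
    · subst h'; exact absurd hef h2
    · exact huniq2 e h f h' hef
  · intro e he f hf h1 h2
    rcases hmem e he with h | ⟨h, _, _⟩ <;> rcases hmem f hf with h' | ⟨h', _, _⟩
    · rw [h, h']
    · subst h; exact absurd ⟨h1.symm, h2.symm⟩ (hnotpr f h')
    · subst h'; exact absurd ⟨h1, h2⟩ (hnotpr e h)
    · exact hnode e h f h' h1 h2
  · intro u k hk1 hk2
    by_cases hc : u = p ∧ k = i
    · obtain ⟨rfl, rfl⟩ := hc
      simp only [eq_self_iff_true, and_self, if_true]
      linarith [hnnU u k hk1 hk2, hnnV r j hj1 hj2]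
    · simp only [hc, if_neg, if_false]
      exact hnnU u k hk1 hk2
  · intro e he
    rcases hmem e he with h | ⟨h, h1, _⟩
    · subst h; simp
    · have hne : ¬(e.1.1 = p ∧ e.1.2 = i) := by
        intro ⟨hA, hB⟩; exact h1 (Prod.ext hA hB)
      simp only [hne, if_neg, if_false]
      exact hsat e h
end

section
/- Let ε > 0 be a rational number such that every weight W(u,v) and every aspiration a_{g,k} is an integer multiple of ε. Suppose the feasible state (a, 𝓜) satisfies stability against pairwise deviation, a copy v*_{j*} of some v* ∈ V is incident to no edge of 𝓜 with a_{v*,j*} ≥ ε, and for every u ∈ U with (u,v*) not in the reduced matching and every i ≤ B(u) the strict inequality a_{u,i} + a_{v*,j*} > W(u,v*) holds. Then the state obtained by decreasing a_{v*,j*} by ε (all else unchanged) is still feasible and still satisfies stability against pairwise deviation. -/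
open Finset

variable {U V : Type*} [Fintype U] [Fintype V] [Nonempty U] [Nonempty V]
  [DecidableEq U] [DecidableEq V]

/-- Decreasing by `ε` the aspiration of an unmatched copy `v₀_(j₀)`
with `a_(v₀,j₀) ≥ ε`, when all weights and aspirations lie on the `ε`-grid and all
stability inequalities involving that copy and unmatched node pairs are strict,
preserves feasibility and stability against pairwise deviation. -/
theorem decrease_aspiration_preserves_stability (W : U → V → ℚ) (hW : ∀ u v, 0 ≤ W u v)
    (BU : U → ℤ) (BV : V → ℤ) (hBU : ∀ u, 1 ≤ BU u) (hBV : ∀ v, 1 ≤ BV v)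
    (ε : ℚ) (hε : 0 < ε) (hWmul : ∀ u v, ∃ n : ℤ, W u v = n * ε)
    (aU : U → ℤ → ℚ) (aV : V → ℤ → ℚ) (𝓜 : Finset ((U × ℤ) × (V × ℤ)))
    (haUmul : ∀ u i, 1 ≤ i → i ≤ BU u → ∃ n : ℤ, aU u i = n * ε)
    (haVmul : ∀ v j, 1 ≤ j → j ≤ BV v → ∃ n : ℤ, aV v j = n * ε)
    (h𝓜 : IsBCopiesMatching BU BV 𝓜)
    (hnn : AllocNonneg BU BV aU aV)
    (hsat : EdgeSaturation W aU aV 𝓜)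
    (hstab : PairwiseStability W BU BV aU aV 𝓜)
    (v₀ : V) (j₀ : ℤ) (hj1 : 1 ≤ j₀) (hj2 : j₀ ≤ BV v₀)
    (hfree : ∀ e ∈ 𝓜, e.2 ≠ (v₀, j₀))
    (hge : ε ≤ aV v₀ j₀)
    (hstrict : ∀ u, (u, v₀) ∉ reduceMatching 𝓜 →
      ∀ i, 1 ≤ i → i ≤ BU u → W u v₀ < aU u i + aV v₀ j₀) :
    IsBCopiesMatching BU BV 𝓜 ∧
    AllocNonneg BU BV aU (fun v j => if v = v₀ ∧ j = j₀ then aV v j - ε else aV v j) ∧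
    EdgeSaturation W aU (fun v j => if v = v₀ ∧ j = j₀ then aV v j - ε else aV v j) 𝓜 ∧
    PairwiseStability W BU BV aU
      (fun v j => if v = v₀ ∧ j = j₀ then aV v j - ε else aV v j) 𝓜 := by
  refine ⟨h𝓜, ⟨hnn.1, ?_⟩, ?_, ?_⟩
  · intro v j hj1' hj2'
    by_cases h : v = v₀ ∧ j = j₀
    · simp only [h, if_pos, and_self]
      obtain ⟨hv, hjj⟩ := h; subst hv; subst hjj
      linarith
    · simp only [if_neg h]; exact hnn.2 v j hj1' hj2'
  · intro e he
    have : ¬(e.2.1 = v₀ ∧ e.2.2 = j₀) := by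
      intro ⟨h1, h2⟩
      exact hfree e he (Prod.ext h1 h2)
    simp only [this, if_neg, not_false_iff]
    exact hsat e he
  · intro u v huv i j hi1 hi2 hj1' hj2'
    by_cases h : v = v₀ ∧ j = j₀
    · obtain ⟨hv, hjj⟩ := h; subst hv; subst hjj
      simp only [if_pos (⟨rfl, rfl⟩ : v = v ∧ j = j)]
      have hlt := hstrict u huv i hi1 hi2
      obtain ⟨n, hn⟩ := hWmul u v
      obtain ⟨m, hm⟩ := haUmul u i hi1 hi2
      obtain ⟨k, hk⟩ := haVmul v j hj1 hj2
      rw [hn, hm, hk] at hlt ⊢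
      have h1 : (n : ℚ) < m + k := by
        rw [← add_mul] at hlt
        have := (mul_lt_mul_iff_left₀ hε).mp hlt
        exact_mod_cast this
      have h2 : n + 1 ≤ m + k := by exact_mod_cast h1
      have h3 : (n : ℚ) + 1 ≤ m + k := by exact_mod_cast h2
      simp only [and_self, if_true]
      nlinarith
    · simp only [if_neg h]
      exact hstab u v huv i j hi1 hi2 hj1' hj2'
end

section
/- Let 𝓜 be a B-copies matching and suppose g ∈ G has a copy incident to no edge of 𝓜, and B(g) is at most the number of nodes in the class opposite to g (B(u) ≤ |V| if g = u ∈ U, B(v) ≤ |U| if g = v ∈ V). Then there exists a node h in the opposite class such that no copy of g is matched in 𝓜 to a copy of h, i.e., (g,h) is not in the reduced matching. -/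
open Finset

variable {U V : Type*} [Fintype U] [Fintype V] [Nonempty U] [Nonempty V]
  [DecidableEq U] [DecidableEq V]

/-- If a node has an unmatched copy and its `B`-value is at most
the number of nodes of the opposite class, then there is a node of the opposite
class it is not matched with in the reduced matching. -/
theorem exists_unmatched_opposite_node
    (BU : U → ℤ) (BV : V → ℤ) (hBU : ∀ u, 1 ≤ BU u) (hBV : ∀ v, 1 ≤ BV v)
    (𝓜 : Finset ((U × ℤ) × (V × ℤ)))
    (h𝓜 : IsBCopiesMatching BU BV 𝓜) :
    (∀ u : U, (∃ i, 1 ≤ i ∧ i ≤ BU u ∧ ∀ e ∈ 𝓜, e.1 ≠ (u, i)) →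
      BU u ≤ (Fintype.card V : ℤ) → ∃ v : V, (u, v) ∉ reduceMatching 𝓜) ∧
    (∀ v : V, (∃ j, 1 ≤ j ∧ j ≤ BV v ∧ ∀ e ∈ 𝓜, e.2 ≠ (v, j)) →
      BV v ≤ (Fintype.card U : ℤ) → ∃ u : U, (u, v) ∉ reduceMatching 𝓜) := by
  obtain ⟨hcop, hleft, hright, hpair⟩ := h𝓜
  constructor
  · rintro u ⟨i, hi1, hi2, hfree⟩ hcard
    set S : Finset ((U × ℤ) × (V × ℤ)) := 𝓜.filter (fun e => e.1.1 = u) with hS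
    have hinj : Set.InjOn (fun e : (U × ℤ) × (V × ℤ) => e.1.2) ↑S := by
      intro e he f hf hef
      simp only [hS, coe_filter, Set.mem_setOf_eq, mem_coe, mem_filter] at he hf
      exact hleft e he.1 f hf.1 (Prod.ext (he.2.trans hf.2.symm) hef)
    have hsub : S.image (fun e => e.1.2) ⊆ (Finset.Icc (1 : ℤ) (BU u)).erase i := by
      intro k hk
      simp only [mem_image] at hk
      obtain ⟨e, he, rfl⟩ := hk
      simp only [hS, mem_filter] at he
      obtain ⟨heM, heu⟩ := he
      refine Finset.mem_erase.2 ⟨?_, ?_⟩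
      · intro h
        exact hfree e heM (Prod.ext heu h)
      · obtain ⟨h1, h2, _, _⟩ := hcop e heM
        exact Finset.mem_Icc.2 ⟨h1, heu ▸ h2⟩
    have hScard : (S.card : ℤ) ≤ BU u - 1 := by
      have h1 : S.card = (S.image (fun e => e.1.2)).card :=
        (Finset.card_image_of_injOn hinj).symm
      have h2 := Finset.card_le_card hsub
      have h3 : ((Finset.Icc (1 : ℤ) (BU u)).erase i).card =
          (Finset.Icc (1 : ℤ) (BU u)).card - 1 :=
        Finset.card_erase_of_mem (Finset.mem_Icc.2 ⟨hi1, hi2⟩)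
      have h4 : (Finset.Icc (1 : ℤ) (BU u)).card = (BU u + 1 - 1).toNat := Int.card_Icc 1 (BU u)
      have hB := hBU u
      omega
    set T : Finset V := S.image (fun e => e.2.1) with hT
    by_contra hcon
    push_neg at hcon
    have huniv : (Finset.univ : Finset V) ⊆ T := by
      intro v _
      have := hcon v
      simp only [reduceMatching, mem_image] at this
      obtain ⟨e, heM, he⟩ := this
      refine Finset.mem_image.2 ⟨e, ?_, by simpa using congrArg Prod.snd he⟩
      simp only [hS, mem_filter]
      exact ⟨heM, by simpa using congrArg Prod.fst he⟩
    have hTcard : Fintype.card V ≤ T.card := by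
      simpa [Finset.card_univ] using Finset.card_le_card huniv
    have := Finset.card_image_le (s := S) (f := fun e => e.2.1)
    rw [← hT] at this
    have hB := hBU u
    omega
  · rintro v ⟨j, hj1, hj2, hfree⟩ hcard
    set S : Finset ((U × ℤ) × (V × ℤ)) := 𝓜.filter (fun e => e.2.1 = v) with hS
    have hinj : Set.InjOn (fun e : (U × ℤ) × (V × ℤ) => e.2.2) ↑S := by
      intro e he f hf hef
      simp only [hS, coe_filter, Set.mem_setOf_eq, mem_coe, mem_filter] at he hf
      exact hright e he.1 f hf.1 (Prod.ext (he.2.trans hf.2.symm) hef)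
    have hsub : S.image (fun e => e.2.2) ⊆ (Finset.Icc (1 : ℤ) (BV v)).erase j := by
      intro k hk
      simp only [mem_image] at hk
      obtain ⟨e, he, rfl⟩ := hk
      simp only [hS, mem_filter] at he
      obtain ⟨heM, hev⟩ := he
      refine Finset.mem_erase.2 ⟨?_, ?_⟩
      · intro h
        exact hfree e heM (Prod.ext hev h)
      · obtain ⟨_, _, h1, h2⟩ := hcop e heM
        exact Finset.mem_Icc.2 ⟨h1, hev ▸ h2⟩
    have hScard : (S.card : ℤ) ≤ BV v - 1 := by
      have h1 : S.card = (S.image (fun e => e.2.2)).card :=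
        (Finset.card_image_of_injOn hinj).symm
      have h2 := Finset.card_le_card hsub
      have h3 : ((Finset.Icc (1 : ℤ) (BV v)).erase j).card =
          (Finset.Icc (1 : ℤ) (BV v)).card - 1 :=
        Finset.card_erase_of_mem (Finset.mem_Icc.2 ⟨hj1, hj2⟩)
      have h4 : (Finset.Icc (1 : ℤ) (BV v)).card = (BV v + 1 - 1).toNat := Int.card_Icc 1 (BV v)
      have hB := hBV v
      omega
    set T : Finset U := S.image (fun e => e.1.1) with hT
    by_contra hcon
    push_neg at hcon
    have huniv : (Finset.univ : Finset U) ⊆ T := by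
      intro u _
      have := hcon u
      simp only [reduceMatching, mem_image] at this
      obtain ⟨e, heM, he⟩ := this
      refine Finset.mem_image.2 ⟨e, ?_, by simpa using congrArg Prod.fst he⟩
      simp only [hS, mem_filter]
      exact ⟨heM, by simpa using congrArg Prod.snd he⟩
    have hTcard : Fintype.card U ≤ T.card := by
      simpa [Finset.card_univ] using Finset.card_le_card huniv
    have := Finset.card_image_le (s := S) (f := fun e => e.1.1)
    rw [← hT] at this
    have hB := hBV v
    omega
end
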